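/- arXiv:0802.0417 — 5 statements merged into one kernel-verified Lean document; each statement's English description precedes it below -/
import Mathlib

section
/- Let λ/μ be a connected skew diagram, and let λ̄ be defined by λ̄_i = λ_{i+1} − 1 for 1 ≤ i ≤ ℓ(λ) − 1 (so λ̄ are the inner rows shifted). Then removing the first northwest ribbon nw₁(λ/μ) from λ/μ yields the skew diagram λ̄/μ; in particular |nw₁(λ/μ)| = λ₁ + ℓ(λ) − 1. -/
open Finset

namespace SkewHooks

/-- The `i`-th principal hook length of a partition (0-indexed):
the hook length of the box `(i, i)`, or `0` if `(i,i)` is not in the diagram. -/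
def hl (l : YoungDiagram) (i : ℕ) : ℕ := l.rowLen i + l.colLen i - (2 * i + 1)

/-- The Durfee size of a partition: the side of the largest square contained in it. -/
def durfee (l : YoungDiagram) : ℕ :=
  ((Finset.range (l.card + 1)).filter (fun i => (i, i) ∈ l)).card

/-- The set of boxes of the skew diagram `l / m`. -/
def skewCells (l m : YoungDiagram) : Finset (ℕ × ℕ) := l.cells \ m.cells

/-- The first northwest ribbon of a set of boxes: all boxes `(i,j)` such that
`(i-1, j-1)` is not a box of the set. -/
def nw1 (A : Finset (ℕ × ℕ)) : Finset (ℕ × ℕ) :=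
  A.filter (fun c => c.1 = 0 ∨ c.2 = 0 ∨ (c.1 - 1, c.2 - 1) ∉ A)

/-- The set of boxes remaining after removing the first `k` northwest ribbons. -/
def nwRest (A : Finset (ℕ × ℕ)) : ℕ → Finset (ℕ × ℕ)
  | 0 => A
  | k + 1 => nwRest A k \ nw1 (nwRest A k)

/-- The `(k+1)`-st northwest ribbon (0-indexed `k`). -/
def nw (A : Finset (ℕ × ℕ)) (k : ℕ) : Finset (ℕ × ℕ) := nw1 (nwRest A k)

/-- The northwest ribbon length partition: `pinw A k = |nw_{k+1}(A)|` (0-indexed). -/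
def pinw (A : Finset (ℕ × ℕ)) (k : ℕ) : ℕ := (nw A k).card

/-- `T` is a Littlewood-Richardson filling of the set of boxes `D` with content `ν`:
a semistandard filling (weakly increasing rows, strictly increasing columns) with
positive entries, `ν k` entries equal to `k+1`, whose reverse reading word
(right to left, top to bottom) is a lattice word, and which is `0` outside `D`. -/
def IsLRFilling (D : Finset (ℕ × ℕ)) (ν : YoungDiagram) (T : ℕ × ℕ → ℕ) : Prop :=
  (∀ c, c ∉ D → T c = 0) ∧
  (∀ c ∈ D, 1 ≤ T c) ∧
  (∀ i j, (i, j) ∈ D → (i, j + 1) ∈ D → T (i, j) ≤ T (i, j + 1)) ∧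
  (∀ i j, (i, j) ∈ D → (i + 1, j) ∈ D → T (i, j) < T (i + 1, j)) ∧
  (∀ k, (D.filter (fun c => T c = k + 1)).card = ν.rowLen k) ∧
  (∀ i j k, (D.filter (fun c => (c.1 < i ∨ (c.1 = i ∧ j ≤ c.2)) ∧ T c = k + 2)).card ≤
    (D.filter (fun c => (c.1 < i ∨ (c.1 = i ∧ j ≤ c.2)) ∧ T c = k + 1)).card)

/-- The coefficient of `[ν]` in the skew character of the set of boxes `D`:
the number of LR fillings of `D` with content `ν`. -/
noncomputable def skewCoeff (D : Finset (ℕ × ℕ)) (ν : YoungDiagram) : ℕ :=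
  Set.ncard {T : ℕ × ℕ → ℕ | IsLRFilling D ν T}

/-- The Littlewood-Richardson coefficient `c(l; m, ν)`:
the number of LR tableaux of shape `l / m` and content `ν`. -/
noncomputable def lr (l m ν : YoungDiagram) : ℕ := skewCoeff (skewCells l m) ν

/-- Lexicographic order on sequences: `f ≤lex g`. -/
def lexLE (f g : ℕ → ℕ) : Prop :=
  f = g ∨ ∃ i, f i < g i ∧ ∀ j < i, f j = g j

/-- A set of boxes decomposes if it splits into two nonempty pieces sharing
no row and no column. -/
def Decomposes (A : Finset (ℕ × ℕ)) : Prop :=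
  ∃ B C : Finset (ℕ × ℕ), B ∪ C = A ∧ B.Nonempty ∧ C.Nonempty ∧
    ∀ b ∈ B, ∀ c ∈ C, b.1 ≠ c.1 ∧ b.2 ≠ c.2

/-- A set of boxes is connected if it is nonempty and does not decompose. -/
def Connected (A : Finset (ℕ × ℕ)) : Prop := A.Nonempty ∧ ¬ Decomposes A

/-- For a connected skew diagram `lam/mu` (occupying all rows and columns of `lam`),
removing the first northwest ribbon yields the skew diagram `lamb/mu`, where
`lamb i = lam (i+1) - 1` (here up to the canonical translation by `(1,1)`);
in particular `|nw₁(lam/mu)| = lam₁ + ℓ(lam) - 1`. -/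
theorem stmt5 (lam lamb mu : YoungDiagram) (hmu : mu ≤ lam)
    (hconn : Connected (skewCells lam mu))
    (hrow : mu.rowLen 0 < lam.rowLen 0) (hcol : mu.colLen 0 < lam.colLen 0)
    (hb : ∀ i, lamb.rowLen i = lam.rowLen (i + 1) - 1) :
    skewCells lam mu \ nw1 (skewCells lam mu) =
      (skewCells lamb mu).image (fun c => (c.1 + 1, c.2 + 1)) ∧
    (nw1 (skewCells lam mu)).card = lam.rowLen 0 + lam.colLen 0 - 1 := by
  classical
  have hlamb : ∀ a b : ℕ, (a, b) ∈ lamb ↔ (a + 1, b + 1) ∈ lam := by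
    intro a b
    rw [YoungDiagram.mem_iff_lt_rowLen, YoungDiagram.mem_iff_lt_rowLen, hb]
    omega
  have hmuc : mu.cells ⊆ lam.cells := hmu
  -- Part 1
  have part1 : skewCells lam mu \ nw1 (skewCells lam mu) =
      (skewCells lamb mu).image (fun c => (c.1 + 1, c.2 + 1)) := by
    ext ⟨i, j⟩
    simp only [Finset.mem_sdiff, Finset.mem_image, Prod.exists, Prod.mk.injEq]
    constructor
    · rintro ⟨hA, hnw⟩
      have hP : ¬(i = 0 ∨ j = 0 ∨ (i - 1, j - 1) ∉ skewCells lam mu) := fun hp =>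
        hnw (Finset.mem_filter.mpr ⟨hA, hp⟩)
      push_neg at hP
      obtain ⟨hi, hj, hprev⟩ := hP
      obtain ⟨i', rfl⟩ : ∃ i', i = i' + 1 := ⟨i - 1, by omega⟩
      obtain ⟨j', rfl⟩ : ∃ j', j = j' + 1 := ⟨j - 1, by omega⟩
      simp only [Nat.add_sub_cancel] at hprev
      rw [skewCells, Finset.mem_sdiff, YoungDiagram.mem_cells, YoungDiagram.mem_cells] at hA hprev
      refine ⟨i', j', ?_, rfl, rfl⟩
      rw [skewCells, Finset.mem_sdiff, YoungDiagram.mem_cells, YoungDiagram.mem_cells]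
      exact ⟨(hlamb i' j').mpr hA.1, hprev.2⟩
    · rintro ⟨a, b, hab, rfl, rfl⟩
      rw [skewCells, Finset.mem_sdiff, YoungDiagram.mem_cells, YoungDiagram.mem_cells] at hab
      have hlam : (a + 1, b + 1) ∈ lam := (hlamb a b).mp hab.1
      have hprevlam : (a, b) ∈ lam := lam.up_left_mem (Nat.le_succ a) (Nat.le_succ b) hlam
      have hprevA : (a, b) ∈ skewCells lam mu := by
        rw [skewCells, Finset.mem_sdiff, YoungDiagram.mem_cells, YoungDiagram.mem_cells]
        exact ⟨hprevlam, hab.2⟩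
      have hAmem : (a + 1, b + 1) ∈ skewCells lam mu := by
        rw [skewCells, Finset.mem_sdiff, YoungDiagram.mem_cells, YoungDiagram.mem_cells]
        refine ⟨hlam, fun hcon => hab.2 (mu.up_left_mem (Nat.le_succ a) (Nat.le_succ b) hcon)⟩
      refine ⟨hAmem, fun hcon => ?_⟩
      rw [nw1, Finset.mem_filter] at hcon
      rcases hcon.2 with h | h | h
      · omega
      · omega
      · simp only [Nat.add_sub_cancel] at h; exact h hprevA
  -- mu is contained in lamb (uses connectedness)
  have hmusub : mu.cells ⊆ lamb.cells := by
    rintro ⟨a, b⟩ hc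
    rw [YoungDiagram.mem_cells] at hc ⊢
    rw [hlamb]
    by_contra hcon
    have hcm : b < mu.rowLen a := YoungDiagram.mem_iff_lt_rowLen.mp hc
    rw [YoungDiagram.mem_iff_lt_rowLen] at hcon
    push_neg at hcon
    apply hconn.2
    refine ⟨(skewCells lam mu).filter (fun c => c.1 ≤ a),
            (skewCells lam mu).filter (fun c => ¬ c.1 ≤ a),
            Finset.filter_union_filter_not_eq _ _, ?_, ?_, ?_⟩
    · refine ⟨(0, mu.rowLen 0), ?_⟩
      rw [Finset.mem_filter, skewCells, Finset.mem_sdiff, YoungDiagram.mem_cells,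
        YoungDiagram.mem_cells, YoungDiagram.mem_iff_lt_rowLen, YoungDiagram.mem_iff_lt_rowLen]
      exact ⟨⟨hrow, by omega⟩, Nat.zero_le a⟩
    · refine ⟨(mu.colLen 0, 0), ?_⟩
      have ha0 : (a, 0) ∈ mu := mu.up_left_mem le_rfl (Nat.zero_le b) hc
      have ha0' : a < mu.colLen 0 := YoungDiagram.mem_iff_lt_colLen.mp ha0
      rw [Finset.mem_filter, skewCells, Finset.mem_sdiff, YoungDiagram.mem_cells,
        YoungDiagram.mem_cells, YoungDiagram.mem_iff_lt_colLen, YoungDiagram.mem_iff_lt_colLen]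
      exact ⟨⟨hcol, by omega⟩, by omega⟩
    · rintro ⟨i, j⟩ hB ⟨i', j'⟩ hC
      rw [Finset.mem_filter, skewCells, Finset.mem_sdiff, YoungDiagram.mem_cells,
        YoungDiagram.mem_cells] at hB hC
      obtain ⟨⟨hBl, hBm⟩, hBi⟩ := hB
      obtain ⟨⟨hCl, _⟩, hCi⟩ := hC
      have hj : mu.rowLen i ≤ j := by
        by_contra h
        exact hBm (YoungDiagram.mem_iff_lt_rowLen.mpr (by omega))
      have hmono : mu.rowLen a ≤ mu.rowLen i := mu.rowLen_anti i a hBi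
      have hj' : j' < lam.rowLen i' := YoungDiagram.mem_iff_lt_rowLen.mp hCl
      have hmono' : lam.rowLen i' ≤ lam.rowLen (a + 1) := lam.rowLen_anti (a + 1) i' (by omega)
      constructor <;> simp only [ne_eq] <;> omega
  -- the shifted copy of lamb inside lam
  have hinj : Function.Injective (fun c : ℕ × ℕ => (c.1 + 1, c.2 + 1)) := by
    rintro ⟨a, b⟩ ⟨c, d⟩ h
    simp only [Prod.mk.injEq] at h ⊢
    omega
  have hSsub : lamb.cells.image (fun c => (c.1 + 1, c.2 + 1)) ⊆ lam.cells := by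
    rintro ⟨i, j⟩ hij
    simp only [Finset.mem_image, Prod.exists, Prod.mk.injEq] at hij
    obtain ⟨a, b, hab, rfl, rfl⟩ := hij
    rw [YoungDiagram.mem_cells] at hab ⊢
    exact (hlamb a b).mp hab
  have hborder : lam.cells \ lamb.cells.image (fun c => (c.1 + 1, c.2 + 1)) =
      lam.cells.filter (fun c => c.1 = 0 ∨ c.2 = 0) := by
    ext ⟨i, j⟩
    simp only [Finset.mem_sdiff, Finset.mem_filter, Finset.mem_image, Prod.exists,
      Prod.mk.injEq]
    constructor
    · rintro ⟨hl, hni⟩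
      refine ⟨hl, ?_⟩
      by_contra h
      push_neg at h
      obtain ⟨i', rfl⟩ : ∃ i', i = i' + 1 := ⟨i - 1, by omega⟩
      obtain ⟨j', rfl⟩ : ∃ j', j = j' + 1 := ⟨j - 1, by omega⟩
      exact hni ⟨i', j', by rw [YoungDiagram.mem_cells, hlamb]; exact hl, rfl, rfl⟩
    · rintro ⟨hl, h⟩
      refine ⟨hl, ?_⟩
      rintro ⟨a, b, _, rfl, rfl⟩
      omega
  have hb0 : (lam.cells.filter (fun c => c.1 = 0 ∨ c.2 = 0)).card =
      lam.rowLen 0 + lam.colLen 0 - 1 := by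
    rw [Finset.filter_or]
    have hrow0 : lam.cells.filter (fun c => c.1 = 0) = lam.row 0 := by
      ext c
      rw [Finset.mem_filter, YoungDiagram.mem_row_iff, YoungDiagram.mem_cells]
    have hcol0 : lam.cells.filter (fun c => c.2 = 0) = lam.col 0 := by
      ext c
      rw [Finset.mem_filter, YoungDiagram.mem_col_iff, YoungDiagram.mem_cells]
    have hint : lam.cells.filter (fun c => c.1 = 0) ∩ lam.cells.filter (fun c => c.2 = 0) =
        {((0 : ℕ), (0 : ℕ))} := by
      ext ⟨i, j⟩
      simp only [Finset.mem_inter, Finset.mem_filter, Finset.mem_singleton, Prod.mk.injEq]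
      constructor
      · rintro ⟨⟨_, h1⟩, ⟨_, h2⟩⟩; exact ⟨h1, h2⟩
      · rintro ⟨rfl, rfl⟩
        have : (0, 0) ∈ lam := YoungDiagram.mem_iff_lt_rowLen.mpr (by omega)
        exact ⟨⟨this, rfl⟩, ⟨this, rfl⟩⟩
    have hcu := Finset.card_union_add_card_inter
      (lam.cells.filter (fun c => c.1 = 0)) (lam.cells.filter (fun c => c.2 = 0))
    rw [hint] at hcu
    have e1 : (lam.cells.filter (fun c => c.1 = 0)).card = lam.rowLen 0 := by
      rw [hrow0, ← YoungDiagram.rowLen_eq_card]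
    have e2 : (lam.cells.filter (fun c => c.2 = 0)).card = lam.colLen 0 := by
      rw [hcol0, ← YoungDiagram.colLen_eq_card]
    rw [e1, e2, Finset.card_singleton] at hcu
    omega
  -- assemble cardinalities
  have c1 : (skewCells lam mu \ nw1 (skewCells lam mu)).card + (nw1 (skewCells lam mu)).card =
      (skewCells lam mu).card :=
    Finset.card_sdiff_add_card_eq_card (Finset.filter_subset _ _)
  have c2 : (skewCells lam mu \ nw1 (skewCells lam mu)).card = (skewCells lamb mu).card := by
    rw [part1, Finset.card_image_of_injective _ hinj]
  have c3 : (skewCells lam mu).card + mu.cells.card = lam.cells.card := by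
    rw [skewCells]; exact Finset.card_sdiff_add_card_eq_card hmuc
  have c4 : (skewCells lamb mu).card + mu.cells.card = lamb.cells.card := by
    rw [skewCells]; exact Finset.card_sdiff_add_card_eq_card hmusub
  have c5 : (lam.cells \ lamb.cells.image (fun c => (c.1 + 1, c.2 + 1))).card +
      (lamb.cells.image (fun c => (c.1 + 1, c.2 + 1))).card = lam.cells.card :=
    Finset.card_sdiff_add_card_eq_card hSsub
  rw [hborder, hb0, Finset.card_image_of_injective _ hinj] at c5
  exact ⟨part1, by omega⟩

end SkewHooks
end

section
/- Let α and β be partitions. The lexicographically largest principal hook length partition among all ν with nonzero Littlewood–Richardson coefficient c(ν; α, β) equals hl(α) + hl(β) (componentwise sum). -/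
open Finset

namespace SkewHooks

/-!
Write `F_d(ν)` for the union of the first `d` principal hooks of `ν`, so that
`|F_d(ν)| = hl_0(ν) + ⋯ + hl_{d-1}(ν)`. In an LR filling of `ν / a` with content `b`, an entry
`k + 1` lies in a row `≥ k` and entries in a column are distinct, so at most `b_k` entries `k + 1`
lie in `F_d(ν)`, and at most `d` of them when `k ≥ d`; these are the sizes of the parts of row `k`
of `b` in `F_d(b)`. Hence `|F_d(ν)| ≤ |F_d(a)| + |F_d(b)|` for all `d`, which is the lexicographic
bound. It is attained by moving the cells of `b` into the complement of `a`: the arms of the first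
`durfee a` principal hooks of `b` go to the ends of the rows of `a`, the legs to the ends of its
columns, and the rest stays. This preserves `min r c`, hence principal hook lengths, and filling
every moved cell with one more than its original row index is an LR filling with content `b`.
-/

open YoungDiagram

lemma hl_eq_rowLen_sub_add_colLen_sub (l : YoungDiagram) (i : ℕ) :
    hl l i = (l.rowLen i - i) + (l.colLen i - (i + 1)) := by
  have h : i < l.rowLen i ↔ i < l.colLen i := mem_iff_lt_rowLen.symm.trans mem_iff_lt_colLen
  unfold hl
  by_cases hi : i < l.rowLen i
  · have := h.1 hi; omega
  · have := mt h.2 hi; omega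

def firstHooks (l : YoungDiagram) (d : ℕ) : Finset (ℕ × ℕ) :=
  l.cells.filter fun c => min c.1 c.2 < d

lemma card_filter_min_eq_hl (l : YoungDiagram) (d : ℕ) :
    (l.cells.filter fun c => min c.1 c.2 = d).card = hl l d := by
  have hsplit : l.cells.filter (fun c => min c.1 c.2 = d) =
      {d} ×ˢ Ico d (l.rowLen d) ∪ Ico (d + 1) (l.colLen d) ×ˢ {d} := by
    ext ⟨r, c⟩
    simp only [mem_filter, mem_cells, mem_union, mem_product, mem_singleton, mem_Ico]
    constructor
    · rintro ⟨hmem, hmin⟩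
      rcases le_total r c with hrc | hcr
      · obtain rfl : r = d := by omega
        exact Or.inl ⟨rfl, by omega, mem_iff_lt_rowLen.1 hmem⟩
      · obtain rfl : c = d := by omega
        by_cases hrc : r = c
        · subst hrc
          exact Or.inl ⟨rfl, le_rfl, mem_iff_lt_rowLen.1 hmem⟩
        · exact Or.inr ⟨⟨by omega, mem_iff_lt_colLen.1 hmem⟩, rfl⟩
    · rintro (⟨rfl, h₁, h₂⟩ | ⟨⟨h₁, h₂⟩, rfl⟩)
      · exact ⟨mem_iff_lt_rowLen.2 h₂, by omega⟩
      · exact ⟨mem_iff_lt_colLen.2 h₂, by omega⟩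
  have hdisj : Disjoint ({d} ×ˢ Ico d (l.rowLen d)) (Ico (d + 1) (l.colLen d) ×ˢ {d}) := by
    rw [disjoint_left]
    simp only [mem_product, mem_singleton, mem_Ico]
    omega
  rw [hsplit, card_union_of_disjoint hdisj, card_product, card_product, card_singleton,
    Nat.card_Ico, Nat.card_Ico, hl_eq_rowLen_sub_add_colLen_sub]
  omega

lemma card_firstHooks (l : YoungDiagram) (d : ℕ) :
    (firstHooks l d).card = ∑ i ∈ range d, hl l i := by
  induction d with
  | zero => simp [firstHooks]
  | succ d ih =>
    have hsplit : firstHooks l (d + 1) =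
        firstHooks l d ∪ l.cells.filter fun c => min c.1 c.2 = d := by
      rw [firstHooks, firstHooks, ← filter_or]
      exact filter_congr fun _ _ => by omega
    have hdisj : Disjoint (firstHooks l d) (l.cells.filter fun c => min c.1 c.2 = d) :=
      disjoint_filter_filter' _ _ fun _ h₁ h₂ c hc => by have := h₁ c hc; have := h₂ c hc; omega
    rw [hsplit, card_union_of_disjoint hdisj, ih, card_filter_min_eq_hl, sum_range_succ]

lemma card_filter_firstHooks_fst (l : YoungDiagram) (d k : ℕ) :
    ((firstHooks l d).filter fun c => c.1 = k).card =
      if k < d then l.rowLen k else min (l.rowLen k) d := by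
  have hrow : (firstHooks l d).filter (fun c => c.1 = k) =
      {k} ×ˢ (range (l.rowLen k)).filter fun j => min k j < d := by
    ext ⟨r, c⟩
    simp only [firstHooks, mem_filter, mem_cells, mem_product, mem_singleton, mem_range,
      mem_iff_lt_rowLen]
    constructor
    · rintro ⟨⟨h₁, h₂⟩, rfl⟩
      exact ⟨rfl, h₁, h₂⟩
    · rintro ⟨rfl, h₁, h₂⟩
      exact ⟨⟨h₁, h₂⟩, rfl⟩
  rw [hrow, card_product, card_singleton, one_mul]
  split_ifs with hk
  · rw [filter_true_of_mem fun j _ => by omega, card_range]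
  · rw [← card_range (min (l.rowLen k) d)]
    congr 1
    ext j
    simp only [mem_filter, mem_range]
    omega

lemma mem_skewCells {l m : YoungDiagram} {c : ℕ × ℕ} : c ∈ skewCells l m ↔ c ∈ l ∧ c ∉ m := by
  simp [skewCells, mem_sdiff, mem_cells]

lemma mem_skewCells_of_le {l m : YoungDiagram} {r₁ c₁ r₂ c₂ r c : ℕ}
    (h₁ : (r₁, c₁) ∈ skewCells l m) (h₂ : (r₂, c₂) ∈ skewCells l m)
    (hr₁ : r₁ ≤ r) (hr₂ : r ≤ r₂) (hc₁ : c₁ ≤ c) (hc₂ : c ≤ c₂) : (r, c) ∈ skewCells l m := by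
  rw [mem_skewCells] at *
  exact ⟨l.up_left_mem hr₂ hc₂ h₂.1, fun h => h₁.2 (m.up_left_mem hr₁ hc₁ h)⟩

namespace IsLRFilling

variable {D : Finset (ℕ × ℕ)} {μ : YoungDiagram} {T : ℕ × ℕ → ℕ}

lemma eq_zero_of_notMem (hT : IsLRFilling D μ T) {c : ℕ × ℕ} (hc : c ∉ D) : T c = 0 := hT.1 c hc

lemma pos (hT : IsLRFilling D μ T) {c : ℕ × ℕ} (hc : c ∈ D) : 1 ≤ T c := hT.2.1 c hc

lemma row_le_succ (hT : IsLRFilling D μ T) {i j : ℕ} (h₁ : (i, j) ∈ D) (h₂ : (i, j + 1) ∈ D) :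
    T (i, j) ≤ T (i, j + 1) := hT.2.2.1 i j h₁ h₂

lemma col_lt_succ (hT : IsLRFilling D μ T) {i j : ℕ} (h₁ : (i, j) ∈ D) (h₂ : (i + 1, j) ∈ D) :
    T (i, j) < T (i + 1, j) := hT.2.2.2.1 i j h₁ h₂

lemma card_filter_eq (hT : IsLRFilling D μ T) (k : ℕ) :
    (D.filter fun c => T c = k + 1).card = μ.rowLen k := hT.2.2.2.2.1 k

lemma lattice (hT : IsLRFilling D μ T) (i j k : ℕ) :
    (D.filter fun c => (c.1 < i ∨ (c.1 = i ∧ j ≤ c.2)) ∧ T c = k + 2).card ≤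
      (D.filter fun c => (c.1 < i ∨ (c.1 = i ∧ j ≤ c.2)) ∧ T c = k + 1).card :=
  hT.2.2.2.2.2 i j k

lemma le_colLen_zero (hT : IsLRFilling D μ T) {c : ℕ × ℕ} (hc : c ∈ D) : T c ≤ μ.colLen 0 := by
  have hpos : 1 ≤ T c := hT.pos hc
  have hrow : 0 < μ.rowLen (T c - 1) := by
    rw [← hT.card_filter_eq (T c - 1)]
    exact card_pos.2 ⟨c, mem_filter.2 ⟨hc, by omega⟩⟩
  have := mem_iff_lt_colLen.1 (mem_iff_lt_rowLen.2 hrow)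
  omega

lemma finite_setOf (D : Finset (ℕ × ℕ)) (μ : YoungDiagram) :
    {T : ℕ × ℕ → ℕ | IsLRFilling D μ T}.Finite := by
  classical
  refine (Set.finite_range fun g : D → Fin (μ.colLen 0 + 1) =>
    fun x => if h : x ∈ D then (g ⟨x, h⟩ : ℕ) else 0).subset ?_
  intro T hT
  refine ⟨fun c => ⟨T c, Nat.lt_succ_of_le (hT.le_colLen_zero c.2)⟩, funext fun x => ?_⟩
  by_cases h : x ∈ D
  · simp only [dif_pos h]
  · simp only [dif_neg h, hT.eq_zero_of_notMem h]

variable {ν a : YoungDiagram}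

lemma row_le (hT : IsLRFilling (skewCells ν a) μ T) {r c₁ c₂ : ℕ}
    (h₁ : (r, c₁) ∈ skewCells ν a) (h₂ : (r, c₂) ∈ skewCells ν a) (hc : c₁ ≤ c₂) :
    T (r, c₁) ≤ T (r, c₂) := by
  induction c₂, hc using Nat.le_induction with
  | base => exact le_rfl
  | succ c hc ih =>
    have hmid := mem_skewCells_of_le h₁ h₂ le_rfl le_rfl hc (Nat.le_succ c)
    exact (ih hmid).trans (hT.row_le_succ hmid h₂)

lemma col_lt (hT : IsLRFilling (skewCells ν a) μ T) {r₁ r₂ c : ℕ}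
    (h₁ : (r₁, c) ∈ skewCells ν a) (h₂ : (r₂, c) ∈ skewCells ν a) (hr : r₁ < r₂) :
    T (r₁, c) < T (r₂, c) := by
  induction r₂, hr using Nat.le_induction with
  | base => exact hT.col_lt_succ h₁ h₂
  | succ r hr ih =>
    have hmid := mem_skewCells_of_le h₁ h₂ (Nat.le_of_succ_le hr) (Nat.le_succ r) le_rfl le_rfl
    exact (ih hmid).trans (hT.col_lt_succ hmid h₂)

/-- By the lattice condition an entry `k + 2` at `(r, c)` is preceded in the reading order by an
entry `k + 1`; rows being weakly increasing, that one lies in an earlier row. -/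
lemma le_row_add_one (hT : IsLRFilling (skewCells ν a) μ T) {r c : ℕ}
    (hc : (r, c) ∈ skewCells ν a) : T (r, c) ≤ r + 1 := by
  induction r using Nat.strong_induction_on generalizing c with
  | _ r ih =>
  by_contra! hlt
  obtain ⟨k, hk⟩ : ∃ k, T (r, c) = k + 2 := ⟨T (r, c) - 2, by omega⟩
  have hlat := hT.lattice r c k
  obtain ⟨⟨r', c'⟩, hmem⟩ : ((skewCells ν a).filter fun x =>
      (x.1 < r ∨ (x.1 = r ∧ c ≤ x.2)) ∧ T x = k + 1).Nonempty := by
    refine card_pos.1 (lt_of_lt_of_le (card_pos.2 ⟨(r, c), ?_⟩) hlat)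
    exact mem_filter.2 ⟨hc, Or.inr ⟨rfl, le_rfl⟩, hk⟩
  obtain ⟨hmem', hpre, hval⟩ := mem_filter.1 hmem
  dsimp only at hpre hval
  rcases hpre with hr' | ⟨rfl, hcc⟩
  · have := ih r' hr' hmem'
    omega
  · have := hT.row_le hc hmem' hcc
    omega

lemma card_filter_col_lt_le (hT : IsLRFilling (skewCells ν a) μ T) (d k : ℕ) :
    ((skewCells ν a).filter fun x => x.2 < d ∧ T x = k).card ≤ d := by
  calc _ ≤ (range d).card := by
        refine card_le_card_of_injOn Prod.snd (fun x hx => ?_) ?_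
        · exact mem_range.2 (mem_filter.1 hx).2.1
        · rintro ⟨r₁, c⟩ hx ⟨r₂, c'⟩ hy (rfl : c = c')
          simp only [coe_filter, Set.mem_ofPred_eq] at hx hy
          rcases lt_trichotomy r₁ r₂ with h | rfl | h
          · exact absurd (hT.col_lt hx.1 hy.1 h) (by omega)
          · rfl
          · exact absurd (hT.col_lt hy.1 hx.1 h) (by omega)
    _ = d := card_range d

/-- Entries `k + 1` number `μ.rowLen k`; when `d ≤ k` those inside the first `d` hooks of `ν` lie
in columns `< d` (they sit in rows `≥ k`), so there are at most `d` of them. -/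
lemma card_filter_value_le (hT : IsLRFilling (skewCells ν a) μ T) (d k : ℕ) :
    ((skewCells ν a).filter fun x => min x.1 x.2 < d ∧ T x = k + 1).card ≤
      ((firstHooks μ d).filter fun c => c.1 = k).card := by
  have hcontent :
      ((skewCells ν a).filter fun x => min x.1 x.2 < d ∧ T x = k + 1).card ≤ μ.rowLen k := by
    rw [← hT.card_filter_eq k]
    exact card_le_card fun x hx => mem_filter.2 ⟨(mem_filter.1 hx).1, (mem_filter.1 hx).2.2⟩
  rw [card_filter_firstHooks_fst]
  split_ifs with hk
  · exact hcontent
  · refine le_min hcontent ((card_le_card ?_).trans (hT.card_filter_col_lt_le d (k + 1)))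
    rintro ⟨r, c⟩ hx
    obtain ⟨hmem, hmin, hval⟩ := mem_filter.1 hx
    have := hT.le_row_add_one hmem
    exact mem_filter.2 ⟨hmem, by dsimp only at hmin hval ⊢; omega, hval⟩

lemma card_firstHooks_le (hT : IsLRFilling (skewCells ν a) μ T) (d : ℕ) :
    (firstHooks ν d).card ≤ (firstHooks a d).card + (firstHooks μ d).card := by
  have hsub : firstHooks ν d ⊆
      firstHooks a d ∪ (skewCells ν a).filter fun x => min x.1 x.2 < d := by
    intro x hx
    simp only [firstHooks, skewCells, mem_union, mem_filter, mem_sdiff] at hx ⊢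
    by_cases hxa : x ∈ a.cells
    · exact Or.inl ⟨hxa, hx.2⟩
    · exact Or.inr ⟨⟨hx.1, hxa⟩, hx.2⟩
  have hskew : ((skewCells ν a).filter fun x => min x.1 x.2 < d).card =
      ∑ k ∈ range (μ.colLen 0),
        ((skewCells ν a).filter fun x => min x.1 x.2 < d ∧ T x = k + 1).card := by
    rw [card_eq_sum_card_fiberwise (f := fun x => T x - 1) fun x hx => ?_]
    · refine sum_congr rfl fun k _ => congrArg card ?_
      rw [filter_filter]
      refine filter_congr fun x hx => ?_
      have := hT.pos hx
      omega
    · have hx := (mem_filter.1 hx).1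
      have := hT.pos hx
      have := hT.le_colLen_zero hx
      show T x - 1 ∈ range _
      exact mem_range.2 (by omega)
  have hμ : (firstHooks μ d).card =
      ∑ k ∈ range (μ.colLen 0), ((firstHooks μ d).filter fun c => c.1 = k).card := by
    refine card_eq_sum_card_fiberwise fun x hx => mem_range.2 (mem_iff_lt_colLen.1 ?_)
    exact μ.up_left_mem le_rfl (Nat.zero_le _) ((mem_cells _).1 (mem_filter.1 hx).1)
  calc (firstHooks ν d).card
      ≤ (firstHooks a d).card + ((skewCells ν a).filter fun x => min x.1 x.2 < d).card :=
        (card_le_card hsub).trans (card_union_le _ _)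
    _ ≤ (firstHooks a d).card + (firstHooks μ d).card := by
        rw [hskew, hμ]
        exact Nat.add_le_add_left (sum_le_sum fun k _ => hT.card_filter_value_le d k) _

end IsLRFilling

lemma skewCoeff_ne_zero_iff {D : Finset (ℕ × ℕ)} {μ : YoungDiagram} :
    skewCoeff D μ ≠ 0 ↔ ∃ T, IsLRFilling D μ T := by
  rw [skewCoeff, Ne, Set.ncard_eq_zero (IsLRFilling.finite_setOf D μ)]
  exact Set.nonempty_iff_ne_empty.symm

lemma lexLE_of_forall_sum_range_le {f g : ℕ → ℕ}
    (h : ∀ d, ∑ i ∈ range d, f i ≤ ∑ i ∈ range d, g i) : lexLE f g := by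
  by_cases hfg : f = g
  · exact Or.inl hfg
  have hne : ∃ i, f i ≠ g i := by
    by_contra! hc
    exact hfg (funext hc)
  have hmin : ∀ j < Nat.find hne, f j = g j := fun j hj => not_not.1 (Nat.find_min hne hj)
  refine Or.inr ⟨Nat.find hne, lt_of_le_of_ne ?_ (Nat.find_spec hne), hmin⟩
  have hsum := h (Nat.find hne + 1)
  have hprefix : ∑ j ∈ range (Nat.find hne), f j = ∑ j ∈ range (Nat.find hne), g j :=
    sum_congr rfl fun j hj => hmin j (mem_range.1 hj)
  rw [sum_range_succ, sum_range_succ, hprefix] at hsum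
  omega

theorem lexLE_hl_of_lr_ne_zero {ν a b : YoungDiagram} (h : lr ν a b ≠ 0) :
    lexLE (fun i => hl ν i) (fun i => hl a i + hl b i) := by
  obtain ⟨T, hT⟩ := skewCoeff_ne_zero_iff.1 h
  refine lexLE_of_forall_sum_range_le fun d => ?_
  rw [sum_add_distrib, ← card_firstHooks, ← card_firstHooks, ← card_firstHooks]
  exact hT.card_firstHooks_le d

lemma lt_durfee_iff {l : YoungDiagram} {i : ℕ} : i < durfee l ↔ (i, i) ∈ l := by
  have hbound : ∀ {i}, (i, i) ∈ l → i < l.card := fun {i} hi =>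
    calc i < l.rowLen 0 := mem_iff_lt_rowLen.1 (l.up_left_mem (Nat.zero_le i) le_rfl hi)
      _ = (l.row 0).card := l.rowLen_eq_card
      _ ≤ l.card := card_le_card (filter_subset _ _)
  have hex : ∃ n, (n, n) ∉ l := ⟨l.card, fun h => lt_irrefl _ (hbound h)⟩
  have hdiag : ∀ i, (i, i) ∈ l ↔ i < Nat.find hex := fun i =>
    ⟨fun hi => not_le.1 fun hn => Nat.find_spec hex (l.up_left_mem hn hn hi),
      fun hi => not_not.1 (Nat.find_min hex hi)⟩
  have hrange : (range (l.card + 1)).filter (fun i => (i, i) ∈ l) = range (Nat.find hex) := by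
    ext j
    rw [mem_filter, mem_range, mem_range, hdiag]
    exact ⟨And.right, fun hj => ⟨Nat.lt_succ_of_lt (hbound ((hdiag j).2 hj)), hj⟩⟩
  rw [durfee, hrange, card_range, hdiag]

lemma durfee_le_rowLen {l : YoungDiagram} {j : ℕ} (hj : j < durfee l) : durfee l ≤ l.rowLen j := by
  have hd := lt_durfee_iff.1 (show durfee l - 1 < durfee l by omega)
  have := mem_iff_lt_rowLen.1 (l.up_left_mem (show j ≤ durfee l - 1 by omega) le_rfl hd)
  omega

lemma durfee_le_colLen {l : YoungDiagram} {j : ℕ} (hj : j < durfee l) : durfee l ≤ l.colLen j := by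
  have hd := lt_durfee_iff.1 (show durfee l - 1 < durfee l by omega)
  have := mem_iff_lt_colLen.1 (l.up_left_mem le_rfl (show j ≤ durfee l - 1 by omega) hd)
  omega

/-- Moves a cell of another diagram into the complement of `a`: with `m = durfee a`, the part
`r ≤ c` of the first `m` rows slides right by `a.rowLen r - r`, the part `c < r` of the first `m`
columns slides down by `a.colLen c - c - 1`, and the cells southeast of `(m, m)` stay put. -/
def shift (a : YoungDiagram) (x : ℕ × ℕ) : ℕ × ℕ :=
  if x.1 < durfee a ∧ x.1 ≤ x.2 then (x.1, x.2 + a.rowLen x.1 - x.1)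
  else if x.2 < durfee a ∧ x.2 < x.1 then (x.1 + a.colLen x.2 - x.2 - 1, x.2)
  else x

def unshift (a : YoungDiagram) (y : ℕ × ℕ) : ℕ × ℕ :=
  if y.1 < durfee a then (y.1, y.2 + y.1 - a.rowLen y.1)
  else if y.2 < durfee a then (y.1 + y.2 + 1 - a.colLen y.2, y.2)
  else y

section shift

variable {a : YoungDiagram}

lemma notMem_iff {r c : ℕ} : (r, c) ∉ a ↔ a.rowLen r ≤ c ∧ a.colLen c ≤ r := by
  have h : c < a.rowLen r ↔ r < a.colLen c := mem_iff_lt_rowLen.symm.trans mem_iff_lt_colLen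
  rw [mem_iff_lt_rowLen]
  omega

lemma shift_notMem (x : ℕ × ℕ) : shift a x ∉ a := by
  obtain ⟨r, c⟩ := x
  have hm : ¬(durfee a ≤ r ∧ durfee a ≤ c ∧ (r, c) ∈ a) := fun ⟨hr, hc, h⟩ =>
    lt_irrefl _ (lt_durfee_iff.2 (a.up_left_mem hr hc h))
  have hrow : r < durfee a → durfee a ≤ a.rowLen r := durfee_le_rowLen
  have hcol : c < durfee a → durfee a ≤ a.colLen c := durfee_le_colLen
  simp only [shift]
  split_ifs with h₁ h₂
  · rw [mem_iff_lt_rowLen]; omega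
  · rw [mem_iff_lt_colLen]; omega
  · exact fun h => hm ⟨by omega, by omega, h⟩

lemma unshift_shift (x : ℕ × ℕ) : unshift a (shift a x) = x := by
  obtain ⟨r, c⟩ := x
  have hrow : r < durfee a → durfee a ≤ a.rowLen r := durfee_le_rowLen
  have hcol : c < durfee a → durfee a ≤ a.colLen c := durfee_le_colLen
  simp only [shift, unshift]
  split_ifs <;> simp only [Prod.mk.injEq, true_and, and_true] at * <;> omega

lemma shift_injective : Function.Injective (shift a) :=
  Function.LeftInverse.injective unshift_shift

lemma shift_unshift {y : ℕ × ℕ} (hy : y ∉ a) : shift a (unshift a y) = y := by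
  obtain ⟨r, c⟩ := y
  have := notMem_iff.1 hy
  simp only [shift, unshift]
  split_ifs <;> simp only [Prod.mk.injEq, true_and, and_true] at * <;> omega

lemma min_shift (x : ℕ × ℕ) : min (shift a x).1 (shift a x).2 = min x.1 x.2 := by
  obtain ⟨r, c⟩ := x
  have hrow : r < durfee a → durfee a ≤ a.rowLen r := durfee_le_rowLen
  have hcol : c < durfee a → durfee a ≤ a.colLen c := durfee_le_colLen
  simp only [shift]
  split_ifs <;> omega

lemma shift_fst_lt_shift_succ_fst (k c : ℕ) : (shift a (k, c)).1 < (shift a (k + 1, c)).1 := by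
  have hcol : c < durfee a → durfee a ≤ a.colLen c := durfee_le_colLen
  simp only [shift]
  split_ifs <;> omega

lemma unshift_mono {y y' : ℕ × ℕ} (h : y' ≤ y) (hy' : y' ∉ a) (hy : y ∉ a) :
    unshift a y' ≤ unshift a y := by
  obtain ⟨r', c'⟩ := y'
  obtain ⟨r, c⟩ := y
  obtain ⟨hr, hc⟩ := Prod.mk_le_mk.1 h
  have := notMem_iff.1 hy
  have := notMem_iff.1 hy'
  have := a.rowLen_anti r' r hr
  have := a.colLen_anti c' c hc
  have hrow : r' < durfee a → durfee a ≤ a.rowLen r' := durfee_le_rowLen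
  have hcol : c' < durfee a → durfee a ≤ a.colLen c' := durfee_le_colLen
  simp only [unshift]
  split_ifs <;> simp only [Prod.mk_le_mk] at * <;> omega

lemma unshift_fst_lt_unshift_succ_fst {r c : ℕ} (h : (r, c) ∉ a) :
    (unshift a (r, c)).1 < (unshift a (r + 1, c)).1 := by
  have := notMem_iff.1 h
  have hrow : r < durfee a → durfee a ≤ a.rowLen r := durfee_le_rowLen
  simp only [unshift]
  split_ifs <;> omega

end shift

section hookSum

variable {a b : YoungDiagram}

lemma notMem_of_mem_image_shift {y : ℕ × ℕ} (hy : y ∈ b.cells.image (shift a)) : y ∉ a := by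
  obtain ⟨x, -, rfl⟩ := mem_image.1 hy
  exact shift_notMem x

lemma disjoint_cells_image_shift : Disjoint a.cells (b.cells.image (shift a)) :=
  disjoint_right.2 fun _ hy ha => notMem_of_mem_image_shift hy ((mem_cells _).1 ha)

/-- `unshift a` is monotone off `a` and inverts `shift a` there, so it pulls lower sets of `b`
back to lower sets. -/
lemma isLowerSet_cells_union_image_shift (a b : YoungDiagram) :
    IsLowerSet (↑(a.cells ∪ b.cells.image (shift a)) : Set (ℕ × ℕ)) := by
  intro y y' hle hy
  rw [coe_union, Set.mem_union, mem_coe, mem_coe] at hy ⊢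
  by_cases hy'a : y' ∈ a.cells
  · exact Or.inl hy'a
  have hya : y ∉ a.cells := fun h => hy'a (a.isLowerSet hle h)
  obtain ⟨x, hx, rfl⟩ := mem_image.1 (hy.resolve_left hya)
  have hx' : unshift a y' ∈ b.cells := b.isLowerSet
    ((unshift_mono hle (mt (mem_cells _).2 hy'a) (mt (mem_cells _).2 hya)).trans_eq
      (unshift_shift x)) hx
  exact Or.inr (mem_image.2 ⟨_, hx', shift_unshift (mt (mem_cells _).2 hy'a)⟩)

variable (a b) in
def hookSum : YoungDiagram where
  cells := a.cells ∪ b.cells.image (shift a)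
  isLowerSet := isLowerSet_cells_union_image_shift a b

lemma skewCells_hookSum : skewCells (hookSum a b) a = b.cells.image (shift a) := by
  rw [skewCells, hookSum, union_sdiff_left, sdiff_eq_self_of_disjoint]
  exact disjoint_cells_image_shift.symm

lemma hl_hookSum (i : ℕ) : hl (hookSum a b) i = hl a i + hl b i := by
  rw [← card_filter_min_eq_hl, ← card_filter_min_eq_hl, ← card_filter_min_eq_hl, hookSum,
    filter_union, card_union_of_disjoint (disjoint_filter_filter disjoint_cells_image_shift),
    filter_image, card_image_of_injective _ shift_injective]
  simp only [min_shift]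

variable (a b) in
def hookSumFilling (y : ℕ × ℕ) : ℕ :=
  if y ∈ b.cells.image (shift a) then (unshift a y).1 + 1 else 0

lemma hookSumFilling_shift {x : ℕ × ℕ} (hx : x ∈ b.cells) :
    hookSumFilling a b (shift a x) = x.1 + 1 := by
  rw [hookSumFilling, if_pos (mem_image_of_mem _ hx), unshift_shift]

lemma card_filter_hookSumFilling (p : ℕ × ℕ → Prop) [DecidablePred p] (k : ℕ) :
    ((b.cells.image (shift a)).filter fun y => p y ∧ hookSumFilling a b y = k + 1).card =
      (b.cells.filter fun x => p (shift a x) ∧ x.1 = k).card := by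
  rw [filter_image, card_image_of_injective _ shift_injective]
  refine congrArg card (filter_congr fun x hx => ?_)
  rw [hookSumFilling_shift hx, Nat.add_right_cancel_iff]

lemma card_filter_hookSumFilling_eq (k : ℕ) :
    ((b.cells.image (shift a)).filter fun y => hookSumFilling a b y = k + 1).card = b.rowLen k := by
  have h := card_filter_hookSumFilling (a := a) (b := b) (fun _ => True) k
  simp only [true_and] at h
  rw [h, rowLen_eq_card]
  rfl

/-- A cell of row `k + 1` of `b` and the cell above it are moved to rows `r' < r`, so the lattice
condition follows from the injection `(k + 1, c) ↦ (k, c)`. -/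
lemma hookSumFilling_lattice (i j k : ℕ) :
    ((b.cells.image (shift a)).filter fun y =>
        (y.1 < i ∨ (y.1 = i ∧ j ≤ y.2)) ∧ hookSumFilling a b y = k + 2).card ≤
      ((b.cells.image (shift a)).filter fun y =>
        (y.1 < i ∨ (y.1 = i ∧ j ≤ y.2)) ∧ hookSumFilling a b y = k + 1).card := by
  rw [card_filter_hookSumFilling (fun c => c.1 < i ∨ (c.1 = i ∧ j ≤ c.2)) (k + 1),
    card_filter_hookSumFilling (fun c => c.1 < i ∨ (c.1 = i ∧ j ≤ c.2)) k]
  refine card_le_card_of_injOn (fun x => (x.1 - 1, x.2)) (fun x hx => ?_) fun x hx x' hx' h => ?_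
  · obtain ⟨r, c⟩ := x
    simp only [coe_filter, Set.mem_ofPred_eq, mem_cells] at hx
    obtain ⟨hx, hpre, rfl⟩ := hx
    have := shift_fst_lt_shift_succ_fst (a := a) k c
    simp only [coe_filter, Set.mem_ofPred_eq, mem_cells, add_tsub_cancel_right, and_true]
    exact ⟨b.up_left_mem (Nat.le_succ k) le_rfl hx, by omega⟩
  · simp only [coe_filter, Set.mem_ofPred_eq] at hx hx'
    simp only [Prod.mk.injEq] at h
    exact Prod.ext (by omega) h.2

lemma isLRFilling_hookSumFilling :
    IsLRFilling (b.cells.image (shift a)) b (hookSumFilling a b) := by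
  refine ⟨fun y hy => if_neg hy, fun y hy => by simp only [hookSumFilling, if_pos hy]; omega,
    fun i j h₁ h₂ => ?_, fun i j h₁ h₂ => ?_, card_filter_hookSumFilling_eq,
    hookSumFilling_lattice⟩
  · simp only [hookSumFilling, if_pos h₁, if_pos h₂, add_le_add_iff_right]
    exact (Prod.mk_le_mk.1 (unshift_mono (Prod.mk_le_mk.2 ⟨le_rfl, Nat.le_succ j⟩)
      (notMem_of_mem_image_shift h₁) (notMem_of_mem_image_shift h₂))).1
  · simp only [hookSumFilling, if_pos h₁, if_pos h₂, add_lt_add_iff_right]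
    exact unshift_fst_lt_unshift_succ_fst (notMem_of_mem_image_shift h₁)

end hookSum

theorem exists_lr_ne_zero_hl_eq_add (a b : YoungDiagram) :
    ∃ ν : YoungDiagram, lr ν a b ≠ 0 ∧ ∀ i, hl ν i = hl a i + hl b i :=
  ⟨hookSum a b, by
    rw [lr, skewCells_hookSum, skewCoeff_ne_zero_iff]
    exact ⟨_, isLRFilling_hookSumFilling⟩, hl_hookSum⟩

/-- For partitions `a`, `b`, the lexicographically largest principal hook length
partition among all `ν` with `c(ν; a, b) ≠ 0` is `hl(a) + hl(b)` (componentwise):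
it is attained, and it bounds every other one from above in lexicographic order. -/
theorem stmt7 (a b : YoungDiagram) :
    (∃ ν : YoungDiagram, lr ν a b ≠ 0 ∧ ∀ i, hl ν i = hl a i + hl b i) ∧
    (∀ ν : YoungDiagram, lr ν a b ≠ 0 →
      lexLE (fun i => hl ν i) (fun i => hl a i + hl b i)) :=
  ⟨exists_lr_ne_zero_hl_eq_add a b, fun _ => lexLE_hl_of_lr_ne_zero⟩
end SkewHooks
end

section
/- Let A be a skew diagram and h the number of nonempty northwest ribbons of A. If some box belongs to nw_h(A), then that box is the southeast corner of an h×h square entirely contained in A; i.e., if (i,j) ∈ nw_h(A) then (i−a, j−b) ∈ A for all 0 ≤ a, b ≤ h−1. -/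
open Finset

namespace SkewHooks

lemma nwRest_subset (A : Finset (ℕ × ℕ)) : ∀ k, nwRest A k ⊆ A
  | 0 => Finset.Subset.refl A
  | k + 1 => (Finset.sdiff_subset).trans (nwRest_subset A k)

lemma mem_nwRest_diag {A : Finset (ℕ × ℕ)} :
    ∀ k i j, (i, j) ∈ nwRest A k → ∀ t ≤ k,
      t ≤ i ∧ t ≤ j ∧ (i - t, j - t) ∈ nwRest A (k - t) := by
  intro k
  induction k with
  | zero =>
    intro i j hm t ht
    obtain rfl : t = 0 := Nat.le_zero.mp ht
    simpa using hm
  | succ k ih =>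
    intro i j hm t ht
    obtain ⟨h1, h2⟩ := Finset.mem_sdiff.mp hm
    have hnot : ¬ (i = 0 ∨ j = 0 ∨ (i - 1, j - 1) ∉ nwRest A k) := fun hc =>
      h2 (Finset.mem_filter.mpr ⟨h1, hc⟩)
    push_neg at hnot
    obtain ⟨hi0, hj0, hprev⟩ := hnot
    match t with
    | 0 => simpa using hm
    | s + 1 =>
      obtain ⟨ha, hb, hc⟩ := ih (i - 1) (j - 1) hprev s (by omega)
      refine ⟨by omega, by omega, ?_⟩
      have e1 : i - (s + 1) = i - 1 - s := by omega
      have e2 : j - (s + 1) = j - 1 - s := by omega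
      have e3 : k + 1 - (s + 1) = k - s := by omega
      rw [e1, e2, e3]; exact hc

/-- If a box belongs to the `h`-th northwest ribbon of a skew diagram, then it is the
southeast corner of an `h × h` square entirely contained in the skew diagram. -/
theorem stmt14 (lam mu : YoungDiagram) (hmu : mu ≤ lam) (h i j : ℕ) (hh : 0 < h)
    (hij : (i, j) ∈ nw (skewCells lam mu) (h - 1)) :
    ∀ a < h, ∀ b < h, a ≤ i ∧ b ≤ j ∧ (i - a, j - b) ∈ skewCells lam mu := by
  have hij' : (i, j) ∈ nwRest (skewCells lam mu) (h - 1) :=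
    Finset.filter_subset _ _ hij
  intro a ha b hb
  obtain ⟨hai, -, hA⟩ := mem_nwRest_diag (h - 1) i j hij' a (by omega)
  obtain ⟨-, hbj, hB⟩ := mem_nwRest_diag (h - 1) i j hij' b (by omega)
  have hA' := nwRest_subset _ _ hA
  have hB' := nwRest_subset _ _ hB
  rw [skewCells, Finset.mem_sdiff] at hA' hB'
  refine ⟨hai, hbj, ?_⟩
  rw [skewCells, Finset.mem_sdiff]
  rcases le_total a b with hab | hab
  · refine ⟨lam.up_left_mem le_rfl (by omega) hA'.1, fun hc => hB'.2 ?_⟩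
    exact mu.up_left_mem (by omega) le_rfl hc
  · refine ⟨lam.up_left_mem (by omega) le_rfl hB'.1, fun hc => hA'.2 ?_⟩
    exact mu.up_left_mem le_rfl (by omega) hc
end SkewHooks
end

section
/- Let A = λ/μ be a skew diagram and h = ℓ(π_nw(A)) the number of its nonempty northwest ribbons. Then every partition ν with c(λ; μ, ν) ≠ 0 has Durfee size d(ν) ≥ h, and this bound is attained: the minimal Durfee size among all ν with c(λ; μ, ν) ≠ 0 equals h (in particular the partitions ν with hl(ν) = π_nw(A) have Durfee size exactly h). -/
/-!
For an order-connected set of boxes, the `k`-th northwest ribbon is nonempty exactly when the set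
contains a `(k+1) × (k+1)` square, so `h` is the side of the largest square in `lam / mu`.

In an LR filling, the bottom row of an `h × h` square carries `h` entries `≥ h`; cutting the
reading word at suitable places, the lattice condition turns these into `h` entries equal to `h`,
so `(h-1, h-1) ∈ ν`.

Conversely, fill every box with its depth in its column as long as that depth is at most `h`.
The deeper boxes have at most `h` boxes per row, since otherwise `lam / mu` would contain an
`(h+1)`-square; right-justify their rows and fill the resulting columns with `h + 1, h + 2, …` from
the top. This is an LR filling with at most `h` entries `h + 1`, so `(h, h) ∉ ν`.

Finally `(i, i) ∈ ν` iff the `i`-th principal hook of `ν` is nonempty, which gives the last claim.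
-/

open Finset

namespace SkewHooks

variable {D : Finset (ℕ × ℕ)}

lemma mem_of_ordConnected (hD : (D : Set (ℕ × ℕ)).OrdConnected) {i₁ j₁ i₂ j₂ i j : ℕ}
    (h₁ : (i₁, j₁) ∈ D) (h₂ : (i₂, j₂) ∈ D) (hi₁ : i₁ ≤ i) (hi₂ : i ≤ i₂) (hj₁ : j₁ ≤ j)
    (hj₂ : j ≤ j₂) : (i, j) ∈ D :=
  hD.out h₁ h₂ ⟨⟨hi₁, hj₁⟩, ⟨hi₂, hj₂⟩⟩

lemma ordConnected_skewCells (lam mu : YoungDiagram) :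
    (skewCells lam mu : Set (ℕ × ℕ)).OrdConnected := by
  rw [skewCells, coe_sdiff, Set.sdiff_eq]
  exact lam.isLowerSet.ordConnected.inter mu.isLowerSet.compl.ordConnected

lemma nw1_subset (A : Finset (ℕ × ℕ)) : nw1 A ⊆ A := filter_subset _ _

lemma nw1_nonempty {A : Finset (ℕ × ℕ)} (hA : A.Nonempty) : (nw1 A).Nonempty := by
  obtain ⟨c, hc, hmin⟩ := exists_min_image A (fun c => c.1 + c.2) hA
  refine ⟨c, mem_filter.2 ⟨hc, ?_⟩⟩
  by_contra! h
  have := hmin _ h.2.2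
  omega

lemma mem_nwRest_iff (hD : (D : Set (ℕ × ℕ)).OrdConnected) {k : ℕ} {c : ℕ × ℕ} :
    c ∈ nwRest D k ↔ c ∈ D ∧ k ≤ c.1 ∧ k ≤ c.2 ∧ (c.1 - k, c.2 - k) ∈ D := by
  induction k generalizing c with
  | zero => simp [nwRest]
  | succ k ih =>
    obtain ⟨i, j⟩ := c
    rw [nwRest, mem_sdiff, nw1, mem_filter, ih, ih]
    constructor
    · rintro ⟨hR, hnot⟩
      have h := not_and.1 hnot hR
      simp only [not_or, not_not] at h
      obtain ⟨hi₀, hj₀, -, hi, hj, hcorner⟩ := h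
      refine ⟨hR.1, by omega, by omega, ?_⟩
      simpa [Nat.sub_sub, Nat.add_comm 1 k] using hcorner
    · rintro ⟨hc, hi, hj, hcorner⟩
      have mem : ∀ {a b}, i - (k + 1) ≤ a → a ≤ i → j - (k + 1) ≤ b → b ≤ j → (a, b) ∈ D :=
        fun ha ha' hb hb' => mem_of_ordConnected hD hcorner hc ha ha' hb hb'
      refine ⟨⟨hc, by omega, by omega, mem (by omega) (by omega) (by omega) (by omega)⟩,
        fun ⟨_, h⟩ => ?_⟩
      rcases h with h | h | h
      · omega
      · omega
      refine h ⟨mem (by omega) (by omega) (by omega) (by omega), by omega, by omega, ?_⟩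
      simpa [Nat.sub_sub, Nat.add_comm 1 k] using hcorner

lemma nw_nonempty_iff (hD : (D : Set (ℕ × ℕ)).OrdConnected) {k : ℕ} :
    (nw D k).Nonempty ↔ ∃ i j, (i, j) ∈ D ∧ (i + k, j + k) ∈ D := by
  constructor
  · rintro ⟨c, hc⟩
    obtain ⟨hc, hi, hj, hcorner⟩ := (mem_nwRest_iff hD).1 (nw1_subset _ hc)
    exact ⟨c.1 - k, c.2 - k, hcorner, by rwa [Nat.sub_add_cancel hi, Nat.sub_add_cancel hj]⟩
  · rintro ⟨i, j, hc, hc'⟩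
    exact nw1_nonempty ⟨(i + k, j + k), (mem_nwRest_iff hD).2 ⟨hc', by simpa using hc⟩⟩

/-- The lattice-word condition, the last clause of `IsLRFilling`. -/
def IsLattice (D : Finset (ℕ × ℕ)) (T : ℕ × ℕ → ℕ) : Prop :=
  ∀ i j k, (D.filter (fun c => (c.1 < i ∨ (c.1 = i ∧ j ≤ c.2)) ∧ T c = k + 2)).card ≤
    (D.filter (fun c => (c.1 < i ∨ (c.1 = i ∧ j ≤ c.2)) ∧ T c = k + 1)).card

lemma card_region_le_of_injOn {T : ℕ × ℕ → ℕ} {k : ℕ} (f : ℕ × ℕ → ℕ × ℕ)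
    (hf : ∀ c ∈ D, T c = k + 2 → f c ∈ D ∧ (f c).1 < c.1 ∧ T (f c) = k + 1)
    (hinj : Set.InjOn f {c | c ∈ D ∧ T c = k + 2}) (i j : ℕ) :
    (D.filter (fun c => (c.1 < i ∨ (c.1 = i ∧ j ≤ c.2)) ∧ T c = k + 2)).card ≤
      (D.filter (fun c => (c.1 < i ∨ (c.1 = i ∧ j ≤ c.2)) ∧ T c = k + 1)).card := by
  refine card_le_card_of_injOn f (fun c hc => ?_) (hinj.mono fun c hc => ?_)
  · simp only [coe_filter, Set.mem_ofPred_eq] at hc ⊢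
    obtain ⟨hfc, hlt, hval⟩ := hf c hc.1 hc.2.2
    exact ⟨hfc, Or.inl (by omega), hval⟩
  · simp only [coe_filter, Set.mem_ofPred_eq] at hc ⊢
    exact ⟨hc.1, hc.2.2⟩

lemma IsLattice.card_filter_le {T : ℕ × ℕ → ℕ} (hT : IsLattice D T) (k : ℕ) :
    (D.filter (fun c => T c = k + 2)).card ≤ (D.filter (fun c => T c = k + 1)).card := by
  have hall : ∀ v, D.filter (fun c => (c.1 < D.sup Prod.fst + 1 ∨
      (c.1 = D.sup Prod.fst + 1 ∧ 0 ≤ c.2)) ∧ T c = v) = D.filter (fun c => T c = v) :=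
    fun v => filter_congr fun c hc => by
      have := le_sup (f := Prod.fst) hc
      constructor
      · exact fun h => h.2
      · exact fun h => ⟨Or.inl (by omega), h⟩
  simpa only [hall] using hT (D.sup Prod.fst + 1) 0 k

lemma exists_rowLen_eq (f : ℕ → ℕ) (hf : Antitone f) {N : ℕ} (hN : ∀ k, N ≤ k → f k = 0) :
    ∃ ν : YoungDiagram, ∀ k, ν.rowLen k = f k := by
  refine ⟨.ofRowLens (List.ofFn fun k : Fin N => f k)
    (List.sortedGE_ofFn_iff.2 fun _ _ h => hf h), fun k => eq_of_forall_lt_iff fun j => ?_⟩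
  rw [← YoungDiagram.mem_iff_lt_rowLen, YoungDiagram.mem_ofRowLens]
  by_cases hk : k < N
  · simp [hk]
  · simp [hk, hN k (not_lt.1 hk)]

lemma exists_isLRFilling {T : ℕ × ℕ → ℕ} (hzero : ∀ c, c ∉ D → T c = 0)
    (hpos : ∀ c ∈ D, 1 ≤ T c)
    (hrow : ∀ i j, (i, j) ∈ D → (i, j + 1) ∈ D → T (i, j) ≤ T (i, j + 1))
    (hcol : ∀ i j, (i, j) ∈ D → (i + 1, j) ∈ D → T (i, j) < T (i + 1, j))
    (hlat : IsLattice D T) : ∃ ν : YoungDiagram, IsLRFilling D ν T := by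
  obtain ⟨ν, hν⟩ := exists_rowLen_eq (fun k => (D.filter (fun c => T c = k + 1)).card)
    (antitone_nat_of_succ_le hlat.card_filter_le) (N := D.sup T) fun k hk =>
      card_eq_zero.2 <| filter_eq_empty_iff.2 fun c hc => by have := le_sup (f := T) hc; omega
  exact ⟨ν, hzero, hpos, hrow, hcol, fun k => (hν k).symm, hlat⟩

namespace IsLRFilling

variable {ν : YoungDiagram} {T : ℕ × ℕ → ℕ}

lemma isLattice (hT : IsLRFilling D ν T) : IsLattice D T := hT.2.2.2.2.2

lemma card_filter_eq_rowLen (hT : IsLRFilling D ν T) (k : ℕ) :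
    (D.filter (fun c => T c = k + 1)).card = ν.rowLen k := hT.2.2.2.2.1 k

lemma le_of_row (hD : (D : Set (ℕ × ℕ)).OrdConnected) (hT : IsLRFilling D ν T) {i j j' : ℕ}
    (h : (i, j) ∈ D) (h' : (i, j') ∈ D) (hj : j ≤ j') : T (i, j) ≤ T (i, j') := by
  obtain ⟨d, rfl⟩ := Nat.exists_eq_add_of_le hj
  induction d with
  | zero => rfl
  | succ d ih =>
    have hmid : (i, j + d) ∈ D := mem_of_ordConnected hD h h' le_rfl le_rfl (by omega) (by omega)
    exact (ih hmid (by omega)).trans (hT.2.2.1 i (j + d) hmid h')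

lemma add_le_of_col (hD : (D : Set (ℕ × ℕ)).OrdConnected) (hT : IsLRFilling D ν T)
    {i j d : ℕ} (h : (i, j) ∈ D) (h' : (i + d, j) ∈ D) : T (i, j) + d ≤ T (i + d, j) := by
  induction d with
  | zero => rfl
  | succ d ih =>
    have hmid : (i + d, j) ∈ D := mem_of_ordConnected hD h h' (by omega) (by omega) le_rfl le_rfl
    show T (i, j) + (d + 1) ≤ T (i + d + 1, j)
    have := hT.2.2.2.1 (i + d) j hmid h'
    have := ih hmid
    omega

/-- Cut the reading word just before the leftmost entry `≥ k + 2` of row `r`. -/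
lemma card_rowsLE_le_card_rowsLT (hD : (D : Set (ℕ × ℕ)).OrdConnected) (hT : IsLRFilling D ν T)
    (r k : ℕ) : (D.filter (fun c => c.1 ≤ r ∧ T c = k + 2)).card ≤
      (D.filter (fun c => c.1 < r ∧ T c = k + 1)).card := by
  have hex : ∃ j, ∀ c ∈ D, c.1 = r → j ≤ c.2 → k + 2 ≤ T c :=
    ⟨D.sup Prod.snd + 1, fun c hc _ hj => absurd (le_sup (f := Prod.snd) hc) (by omega)⟩
  refine le_trans (card_le_card fun c hc => ?_)
    ((hT.isLattice r (Nat.find hex) k).trans (card_le_card fun c hc => ?_))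
  · simp only [mem_filter] at hc ⊢
    refine ⟨hc.1, ?_, hc.2.2⟩
    rcases hc.2.1.lt_or_eq with hlt | rfl
    · exact Or.inl hlt
    refine Or.inr ⟨rfl, Nat.find_min' hex ?_⟩
    rintro ⟨a, b⟩ hab rfl hj
    exact hc.2.2 ▸ hT.le_of_row hD hc.1 hab hj
  · simp only [mem_filter] at hc ⊢
    refine ⟨hc.1, ?_, hc.2.2⟩
    rcases hc.2.1 with hlt | ⟨hr, hj⟩
    · exact hlt
    · have := Nat.find_spec hex c hc.1 hr hj
      omega

lemma card_row_ge_le_card_rowsLE (hD : (D : Set (ℕ × ℕ)).OrdConnected)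
    (hT : IsLRFilling D ν T) (r k : ℕ) :
    (D.filter (fun c => c.1 = r ∧ k + 1 ≤ T c)).card ≤
      (D.filter (fun c => c.1 ≤ r ∧ T c = k + 1)).card := by
  have hsplit : ∀ p q : ℕ × ℕ → Prop, [DecidablePred p] → [DecidablePred q] →
      (∀ c, ¬ (p c ∧ q c)) → (D.filter (fun c => p c ∨ q c)).card =
        (D.filter p).card + (D.filter q).card := fun p q _ _ hpq => by
    rw [filter_or, card_union_of_disjoint (disjoint_filter.2 fun c _ hp hq => hpq c ⟨hp, hq⟩)]
  obtain ⟨n, hn⟩ : ∃ n, D.sup T ≤ k + n := ⟨D.sup T, by omega⟩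
  induction n generalizing k with
  | zero =>
    rw [card_eq_zero.2 (filter_eq_empty_iff.2 fun c hc h => ?_)]
    · exact Nat.zero_le _
    · have := le_sup (f := T) hc
      omega
  | succ n ih =>
    calc (D.filter (fun c => c.1 = r ∧ k + 1 ≤ T c)).card
        = (D.filter (fun c => c.1 = r ∧ T c = k + 1 ∨ c.1 = r ∧ k + 1 + 1 ≤ T c)).card :=
          congrArg card (filter_congr fun c _ => by omega)
      _ = (D.filter (fun c => c.1 = r ∧ T c = k + 1)).card +
          (D.filter (fun c => c.1 = r ∧ k + 1 + 1 ≤ T c)).card := hsplit _ _ fun c => by omega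
      _ ≤ (D.filter (fun c => c.1 = r ∧ T c = k + 1)).card +
          (D.filter (fun c => c.1 < r ∧ T c = k + 1)).card :=
          Nat.add_le_add_left
            ((ih (k + 1) (by omega)).trans (hT.card_rowsLE_le_card_rowsLT hD r k)) _
      _ = (D.filter (fun c => c.1 = r ∧ T c = k + 1 ∨ c.1 < r ∧ T c = k + 1)).card :=
          (hsplit _ _ fun c => by omega).symm
      _ = (D.filter (fun c => c.1 ≤ r ∧ T c = k + 1)).card :=
          congrArg card (filter_congr fun c _ => by omega)

/-- The bottom row of the square carries `k + 1` entries `≥ k + 1`. -/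
lemma diag_mem_of_square (hD : (D : Set (ℕ × ℕ)).OrdConnected) (hT : IsLRFilling D ν T)
    {i j k : ℕ} (h : (i, j) ∈ D) (h' : (i + k, j + k) ∈ D) : (k, k) ∈ ν := by
  have hbottom : ∀ t ≤ k, (i + k, j + t) ∈ D ∧ k + 1 ≤ T (i + k, j + t) := fun t ht => by
    have htop : (i, j + t) ∈ D :=
      mem_of_ordConnected hD h h' le_rfl (by omega) (by omega) (by omega)
    have hmem : (i + k, j + t) ∈ D :=
      mem_of_ordConnected hD h h' (by omega) le_rfl (by omega) (by omega)
    have := hT.add_le_of_col hD htop hmem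
    have := hT.2.1 _ htop
    exact ⟨hmem, by omega⟩
  have hcard : k + 1 ≤ (D.filter (fun c => c.1 = i + k ∧ k + 1 ≤ T c)).card := by
    simpa using card_le_card_of_injOn (s := range (k + 1)) (fun t => (i + k, j + t))
      (fun t ht => by
        have := hbottom t (by simpa [Nat.lt_succ_iff] using ht)
        simpa using ⟨this.1, this.2⟩)
      (fun t _ t' _ htt' => by simpa using htt')
  rw [YoungDiagram.mem_iff_lt_rowLen, ← hT.card_filter_eq_rowLen]
  calc k < (D.filter (fun c => c.1 = i + k ∧ k + 1 ≤ T c)).card := hcard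
    _ ≤ (D.filter (fun c => c.1 ≤ i + k ∧ T c = k + 1)).card :=
        hT.card_row_ge_le_card_rowsLE hD (i + k) k
    _ ≤ (D.filter (fun c => T c = k + 1)).card := card_le_card fun c hc => by
        simp only [mem_filter] at hc ⊢
        exact ⟨hc.1, hc.2.2⟩

end IsLRFilling

lemma mem_iff_lt_durfee {ν : YoungDiagram} {i : ℕ} : (i, i) ∈ ν ↔ i < durfee ν := by
  constructor
  · intro hi
    have hcard : i + 1 ≤ ν.card := by
      simpa using card_le_card_of_injOn (s := range (i + 1)) (t := ν.cells) (fun t => (t, t))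
        (fun t ht => by
          simpa using ν.up_left_mem (Nat.lt_succ_iff.1 (mem_range.1 ht))
            (Nat.lt_succ_iff.1 (mem_range.1 ht)) hi)
        (fun t _ t' _ h => by simpa using h)
    calc i < (range (i + 1)).card := by simp
      _ ≤ durfee ν := card_le_card fun t ht => by
        have ht := Nat.lt_succ_iff.1 (mem_range.1 ht)
        exact mem_filter.2 ⟨mem_range.2 (by omega), ν.up_left_mem ht ht hi⟩
  · intro hi
    by_contra hnot
    have : durfee ν ≤ (range i).card := card_le_card fun t ht => by
      obtain ⟨-, ht⟩ := mem_filter.1 ht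
      by_contra hti
      have hit := not_lt.1 (mt mem_range.2 hti)
      exact hnot (ν.up_left_mem hit hit ht)
    rw [card_range] at this
    omega

lemma mem_iff_hl_pos {ν : YoungDiagram} {i : ℕ} : (i, i) ∈ ν ↔ 0 < hl ν i := by
  rw [hl, YoungDiagram.mem_iff_lt_rowLen]
  constructor
  · intro h
    have := YoungDiagram.mem_iff_lt_colLen.1 (YoungDiagram.mem_iff_lt_rowLen.2 h)
    omega
  · intro h
    by_contra hrow
    have : ¬ i < ν.colLen i := fun h =>
      hrow (YoungDiagram.mem_iff_lt_rowLen.1 (YoungDiagram.mem_iff_lt_colLen.2 h))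
    omega

lemma finite_setOf_isLRFilling (D : Finset (ℕ × ℕ)) (ν : YoungDiagram) :
    {T : ℕ × ℕ → ℕ | IsLRFilling D ν T}.Finite := by
  refine Set.Finite.of_finite_image (f := fun T (c : D) => T c)
    ((Set.Finite.pi (t := fun _ => Set.Iio (ν.colLen 0 + 1)) fun _ => Set.finite_Iio _).subset ?_)
    fun T hT T' hT' h => funext fun c => ?_
  · rintro _ ⟨T, hT, rfl⟩ c _
    have hpos := hT.2.1 c c.2
    have hrow : (T c - 1, 0) ∈ ν := by
      rw [YoungDiagram.mem_iff_lt_rowLen, ← hT.card_filter_eq_rowLen, card_pos]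
      exact ⟨c, mem_filter.2 ⟨c.2, by omega⟩⟩
    have := YoungDiagram.mem_iff_lt_colLen.1 hrow
    simp only [Set.mem_Iio]
    omega
  · by_cases hc : c ∈ D
    · exact congrFun h ⟨c, hc⟩
    · rw [hT.1 c hc, hT'.1 c hc]

lemma lr_ne_zero_iff {lam mu ν : YoungDiagram} :
    lr lam mu ν ≠ 0 ↔ ∃ T, IsLRFilling (skewCells lam mu) ν T := by
  rw [lr, skewCoeff, Ne, Set.ncard_eq_zero (finite_setOf_isLRFilling _ _), ← Ne,
    ← Set.nonempty_iff_ne_empty]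
  rfl

section SortedFill

variable {E : Finset (ℕ × ℕ)}

def row (E : Finset (ℕ × ℕ)) (i : ℕ) : Finset (ℕ × ℕ) := E.filter (fun c => c.1 = i)

def rowCount (E : Finset (ℕ × ℕ)) (i : ℕ) : ℕ := (row E i).card

def rowMax (E : Finset (ℕ × ℕ)) (i : ℕ) : ℕ := (row E i).sup Prod.snd

def eastDist (E : Finset (ℕ × ℕ)) (c : ℕ × ℕ) : ℕ := rowMax E c.1 - c.2

/-- Right-justify the rows of `E` and fill each column of the result with `1, 2, …` from the
top. -/
def sortedFill (E : Finset (ℕ × ℕ)) (c : ℕ × ℕ) : ℕ :=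
  1 + ((range c.1).filter (fun i => eastDist E c < rowCount E i)).card

/-- The box just above `c` in the right-justified picture. -/
def sortedPrev (E : Finset (ℕ × ℕ)) (c : ℕ × ℕ) : ℕ × ℕ :=
  let p := ((range c.1).filter (fun i => eastDist E c < rowCount E i)).sup id
  (p, rowMax E p - eastDist E c)

lemma mem_row {i : ℕ} {c : ℕ × ℕ} : c ∈ row E i ↔ c ∈ E ∧ c.1 = i := mem_filter

lemma le_rowMax {i j : ℕ} (h : (i, j) ∈ E) : j ≤ rowMax E i :=
  le_sup (f := Prod.snd) (mem_row.2 ⟨h, rfl⟩)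

lemma rowCount_le_rowMax_add_one (i : ℕ) : rowCount E i ≤ rowMax E i + 1 := by
  simpa [rowCount] using card_le_card_of_injOn (s := row E i) (t := range (rowMax E i + 1)) Prod.snd
    (fun c hc => mem_range.2 (Nat.lt_succ_of_le (le_sup (f := Prod.snd) hc)))
    (fun c hc c' hc' h => Prod.ext ((mem_row.1 hc).2.trans (mem_row.1 hc').2.symm) h)

lemma mk_rowMax_mem {i j : ℕ} (h : (i, j) ∈ E) : (i, rowMax E i) ∈ E := by
  obtain ⟨c, hc, hmax⟩ := exists_mem_eq_sup (row E i) ⟨(i, j), mem_row.2 ⟨h, rfl⟩⟩ Prod.snd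
  obtain ⟨hc, rfl⟩ := mem_row.1 hc
  rwa [rowMax, hmax]

lemma mem_iff_eastDist_lt (hE : (E : Set (ℕ × ℕ)).OrdConnected) {i j : ℕ} :
    (i, j) ∈ E ↔ j ≤ rowMax E i ∧ rowMax E i - j < rowCount E i := by
  constructor
  · intro h
    have hj := le_rowMax h
    have := card_le_card_of_injOn (s := Icc j (rowMax E i)) (t := row E i) (fun x => (i, x))
      (fun x hx => mem_row.2 ⟨mem_of_ordConnected hE h (mk_rowMax_mem h) le_rfl le_rfl
        (mem_Icc.1 hx).1 (mem_Icc.1 hx).2, rfl⟩)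
      (fun x _ x' _ hx => by simpa using hx)
    rw [Nat.card_Icc] at this
    exact ⟨hj, by rw [rowCount]; omega⟩
  · rintro ⟨hj, hlt⟩
    obtain ⟨c, hc⟩ := card_pos.1 (show 0 < rowCount E i by omega)
    obtain ⟨hc, rfl⟩ := mem_row.1 hc
    by_cases hleft : ∃ c' ∈ E, c'.1 = c.1 ∧ c'.2 ≤ j
    · obtain ⟨c', hc', hrow, hle⟩ := hleft
      rw [← hrow] at hj ⊢
      exact mem_of_ordConnected hE hc' (mk_rowMax_mem hc') le_rfl le_rfl hle hj
    · push Not at hleft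
      have := card_le_card_of_injOn (s := row E c.1) (t := Ioc j (rowMax E c.1)) Prod.snd
        (fun c' hc' => mem_Ioc.2 ⟨hleft c' (mem_row.1 hc').1 (mem_row.1 hc').2,
          le_sup (f := Prod.snd) hc'⟩)
        (fun x hx x' hx' h => Prod.ext ((mem_row.1 hx).2.trans (mem_row.1 hx').2.symm) h)
      rw [Nat.card_Ioc] at this
      exact absurd this (not_le.2 hlt)

lemma one_le_sortedFill (c : ℕ × ℕ) : 1 ≤ sortedFill E c := Nat.le_add_right 1 _

lemma sortedFill_mono_right {i j j' : ℕ} (hj : j ≤ j') :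
    sortedFill E (i, j) ≤ sortedFill E (i, j') :=
  Nat.add_le_add_left (card_le_card (monotone_filter_right _ fun _ h => by
    simp only [eastDist] at h ⊢; omega)) 1

/-- Every earlier row reaching the east distance of `c` also reaches that of `c'`, and so does
the row of `c` itself. -/
lemma sortedFill_lt (hE : (E : Set (ℕ × ℕ)).OrdConnected) {c c' : ℕ × ℕ} (hc : c ∈ E)
    (hlt : c.1 < c'.1) (hd : eastDist E c' ≤ eastDist E c) : sortedFill E c < sortedFill E c' := by
  have hrow : eastDist E c < rowCount E c.1 := ((mem_iff_eastDist_lt hE).1 hc).2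
  have hsub : insert c.1 ((range c.1).filter (fun i => eastDist E c < rowCount E i)) ⊆
      (range c'.1).filter (fun i => eastDist E c' < rowCount E i) := by
    intro i hi
    simp only [mem_insert, mem_filter, mem_range] at hi ⊢
    rcases hi with rfl | hi <;> omega
  have := card_le_card hsub
  rw [card_insert_of_notMem (by simp)] at this
  simp only [sortedFill]
  omega

lemma sortedFill_lt_of_col (hE : (E : Set (ℕ × ℕ)).OrdConnected) {i i' j : ℕ}
    (h : (i, j) ∈ E) (h' : (i', j) ∈ E) (hi : i < i') :
    sortedFill E (i, j) < sortedFill E (i', j) := by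
  refine sortedFill_lt hE h hi ?_
  have : rowMax E i' ≤ rowMax E i :=
    le_rowMax (mem_of_ordConnected hE h (mk_rowMax_mem h') le_rfl hi.le (le_rowMax h') le_rfl)
  simp only [eastDist]
  omega

lemma eq_of_sortedFill_eq (hE : (E : Set (ℕ × ℕ)).OrdConnected) {c c' : ℕ × ℕ}
    (hc : c ∈ E) (hc' : c' ∈ E) (hd : eastDist E c = eastDist E c')
    (hv : sortedFill E c = sortedFill E c') : c = c' := by
  have hrow : c.1 = c'.1 := by
    rcases lt_trichotomy c.1 c'.1 with h | h | h
    · exact absurd hv (sortedFill_lt hE hc h hd.ge).ne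
    · exact h
    · exact absurd hv (sortedFill_lt hE hc' h hd.le).ne'
  have h₁ := le_rowMax (E := E) (i := c.1) hc
  have h₂ := le_rowMax (E := E) (i := c'.1) hc'
  simp only [eastDist, hrow] at hd h₁
  exact Prod.ext hrow (by omega)

lemma sortedPrev_spec (hE : (E : Set (ℕ × ℕ)).OrdConnected) {c : ℕ × ℕ}
    (hv : 2 ≤ sortedFill E c) :
    sortedPrev E c ∈ E ∧ (sortedPrev E c).1 < c.1 ∧ eastDist E (sortedPrev E c) = eastDist E c ∧
      sortedFill E (sortedPrev E c) + 1 = sortedFill E c := by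
  set S := (range c.1).filter (fun i => eastDist E c < rowCount E i) with hS
  have hfill : sortedFill E c = 1 + S.card := rfl
  have hne : S.Nonempty := card_pos.1 (by omega)
  obtain ⟨p, hpS, hmax⟩ := exists_mem_eq_sup S hne id
  have hle : ∀ i ∈ S, i ≤ p := fun i hi => by simpa [hmax] using le_sup (f := id) hi
  have hp := hpS
  simp only [hS, mem_filter, mem_range] at hp
  have hprev : sortedPrev E c = (p, rowMax E p - eastDist E c) := by
    simp only [sortedPrev, ← hS, hmax, id]
  have := rowCount_le_rowMax_add_one (E := E) p
  have hdist : eastDist E (sortedPrev E c) = eastDist E c := by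
    rw [hprev, eastDist]
    dsimp only
    omega
  refine ⟨?_, by rw [hprev]; exact hp.1, hdist, ?_⟩
  · rw [hprev, mem_iff_eastDist_lt hE]
    omega
  · have hS' : (range p).filter (fun i => eastDist E c < rowCount E i) = S.erase p := by
      ext i
      simp only [hS, mem_erase, mem_filter, mem_range] at hle ⊢
      constructor
      · intro hi
        exact ⟨by omega, by omega, hi.2⟩
      · intro hi
        exact ⟨lt_of_le_of_ne (hle i ⟨hi.2.1, hi.2.2⟩) hi.1, hi.2.2⟩
    have hval : sortedFill E (sortedPrev E c) = 1 + (S.erase p).card := by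
      simp only [sortedFill, hdist]
      rw [hprev, hS']
    rw [hval, card_erase_of_mem hpS]
    have := card_pos.2 hne
    omega

lemma card_sortedFill_eq_one_le (hE : (E : Set (ℕ × ℕ)).OrdConnected) {m : ℕ}
    (hm : ∀ i, rowCount E i ≤ m) : (E.filter (fun c => sortedFill E c = 1)).card ≤ m := by
  simpa using card_le_card_of_injOn (t := range m) (eastDist E)
    (fun c hc => mem_range.2 (lt_of_lt_of_le
      ((mem_iff_eastDist_lt hE).1 (mem_filter.1 hc).1).2 (hm c.1)))
    (fun c hc c' hc' h => eq_of_sortedFill_eq hE (mem_filter.1 hc).1 (mem_filter.1 hc').1 h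
      ((mem_filter.1 hc).2.trans (mem_filter.1 hc').2.symm))

end SortedFill

section ColDepth

variable {D : Finset (ℕ × ℕ)}

def colDepth (D : Finset (ℕ × ℕ)) (c : ℕ × ℕ) : ℕ :=
  ((range (c.1 + 1)).filter (fun t => (t, c.2) ∈ D)).card

lemma colDepth_le_succ (c : ℕ × ℕ) : colDepth D c ≤ c.1 + 1 :=
  (card_filter_le _ _).trans (card_range _).le

lemma colDepth_pos {c : ℕ × ℕ} (hc : c ∈ D) : 0 < colDepth D c :=
  card_pos.2 ⟨c.1, mem_filter.2 ⟨mem_range.2 c.1.lt_succ_self, hc⟩⟩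

lemma colDepth_succ {i j : ℕ} (h : (i + 1, j) ∈ D) :
    colDepth D (i + 1, j) = colDepth D (i, j) + 1 := by
  simp only [colDepth]
  rw [range_add_one (n := i + 1), filter_insert, if_pos h, card_insert_of_notMem (by simp)]

lemma colDepth_mono_left {i i' j : ℕ} (hi : i ≤ i') : colDepth D (i, j) ≤ colDepth D (i', j) :=
  card_le_card (filter_subset_filter _ (range_subset_range.2 (by omega)))

lemma colDepth_mono_right (hD : (D : Set (ℕ × ℕ)).OrdConnected) {i j j' : ℕ}
    (h' : (i, j') ∈ D) (hj : j ≤ j') : colDepth D (i, j) ≤ colDepth D (i, j') :=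
  card_le_card fun t ht => by
    obtain ⟨ht, htD⟩ := mem_filter.1 ht
    exact mem_filter.2 ⟨ht, mem_of_ordConnected hD htD h' le_rfl
      (Nat.lt_succ_iff.1 (mem_range.1 ht)) hj le_rfl⟩

lemma colDepth_add (hD : (D : Set (ℕ × ℕ)).OrdConnected) {i j s : ℕ} (h : (i, j) ∈ D)
    (h' : (i + s, j) ∈ D) : colDepth D (i + s, j) = colDepth D (i, j) + s := by
  induction s with
  | zero => rfl
  | succ s ih =>
    rw [← Nat.add_assoc] at h' ⊢
    rw [colDepth_succ h', ih (mem_of_ordConnected hD h h' (by omega) (by omega) le_rfl le_rfl)]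
    rfl

lemma sub_mem_of_lt_colDepth (hD : (D : Set (ℕ × ℕ)).OrdConnected) {i j s : ℕ}
    (h : (i, j) ∈ D) (hs : s < colDepth D (i, j)) : s ≤ i ∧ (i - s, j) ∈ D := by
  have hsi : s ≤ i := by have := colDepth_le_succ (D := D) (i, j); dsimp only at this; omega
  refine ⟨hsi, ?_⟩
  by_contra hnot
  have : colDepth D (i, j) ≤ (Ioc (i - s) i).card := card_le_card fun t ht => by
    obtain ⟨ht, htD⟩ := mem_filter.1 ht
    have ht := Nat.lt_succ_iff.1 (mem_range.1 ht)
    refine mem_Ioc.2 ⟨not_le.1 fun hle => hnot ?_, ht⟩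
    exact mem_of_ordConnected hD htD h hle (by omega) le_rfl le_rfl
  rw [Nat.card_Ioc] at this
  omega

end ColDepth

section GluedFilling

variable {D : Finset (ℕ × ℕ)} {h : ℕ}

def deep (D : Finset (ℕ × ℕ)) (h : ℕ) : Finset (ℕ × ℕ) := D.filter (fun c => h < colDepth D c)

def glueFill (D : Finset (ℕ × ℕ)) (h : ℕ) (c : ℕ × ℕ) : ℕ :=
  if c ∈ D then (if colDepth D c ≤ h then colDepth D c else h + sortedFill (deep D h) c) else 0

lemma mem_deep {c : ℕ × ℕ} : c ∈ deep D h ↔ c ∈ D ∧ h < colDepth D c := mem_filter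

lemma deep_subset : deep D h ⊆ D := filter_subset _ _

lemma ordConnected_deep (hD : (D : Set (ℕ × ℕ)).OrdConnected) :
    (deep D h : Set (ℕ × ℕ)).OrdConnected := by
  refine ⟨fun ⟨i₁, j₁⟩ h₁ ⟨i₂, j₂⟩ h₂ ⟨i, j⟩ ⟨⟨hi₁, hj₁⟩, ⟨hi₂, hj₂⟩⟩ => ?_⟩
  simp only [mem_coe, mem_deep] at h₁ h₂ ⊢
  refine ⟨mem_of_ordConnected hD h₁.1 h₂.1 hi₁ hi₂ hj₁ hj₂, ?_⟩
  calc h < colDepth D (i₁, j₁) := h₁.2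
    _ ≤ colDepth D (i₁, j) := colDepth_mono_right hD
        (mem_of_ordConnected hD h₁.1 h₂.1 le_rfl (hi₁.trans hi₂) hj₁ hj₂) hj₁
    _ ≤ colDepth D (i, j) := colDepth_mono_left hi₁

/-- A row of `deep D h` with `h + 1` boxes would give an `(h+1) × (h+1)` square in `D`. -/
lemma rowCount_deep_le (hD : (D : Set (ℕ × ℕ)).OrdConnected)
    (hsq : ∀ i j, (i, j) ∈ D → (i + h, j + h) ∉ D) (i : ℕ) : rowCount (deep D h) i ≤ h := by
  by_contra! hlt
  have hE := ordConnected_deep (h := h) hD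
  have hwest := (mem_iff_eastDist_lt hE (i := i) (j := rowMax (deep D h) i - h)).2
    ⟨Nat.sub_le _ _, by omega⟩
  have hrow := rowCount_le_rowMax_add_one (E := deep D h) i
  have heast := deep_subset (mk_rowMax_mem hwest)
  obtain ⟨hwD, hdepth⟩ := mem_deep.1 hwest
  obtain ⟨hhi, hcorner⟩ := sub_mem_of_lt_colDepth hD hwD hdepth
  refine hsq _ _ hcorner ?_
  rwa [Nat.sub_add_cancel hhi, Nat.sub_add_cancel (by omega)]

lemma glueFill_of_colDepth_le {c : ℕ × ℕ} (hc : c ∈ D) (hd : colDepth D c ≤ h) :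
    glueFill D h c = colDepth D c := by
  rw [glueFill, if_pos hc, if_pos hd]

lemma glueFill_of_mem_deep {c : ℕ × ℕ} (hc : c ∈ deep D h) :
    glueFill D h c = h + sortedFill (deep D h) c := by
  rw [glueFill, if_pos (mem_deep.1 hc).1, if_neg (not_le.2 (mem_deep.1 hc).2)]

lemma glueFill_eq_iff_of_le {c : ℕ × ℕ} {v : ℕ} (hv : v ≤ h) (hv₁ : 1 ≤ v) :
    glueFill D h c = v ↔ c ∈ D ∧ colDepth D c = v := by
  by_cases hc : c ∈ D
  · by_cases hd : colDepth D c ≤ h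
    · rw [glueFill_of_colDepth_le hc hd]
      exact ⟨fun hcv => ⟨hc, hcv⟩, And.right⟩
    · rw [glueFill_of_mem_deep (mem_deep.2 ⟨hc, not_le.1 hd⟩)]
      have := one_le_sortedFill (E := deep D h) c
      exact ⟨fun _ => by omega, fun hcv => by omega⟩
  · rw [glueFill, if_neg hc]
    exact ⟨fun _ => by omega, fun hcv => absurd hcv.1 hc⟩

lemma glueFill_eq_add_iff {c : ℕ × ℕ} {s : ℕ} (hs : 1 ≤ s) :
    glueFill D h c = h + s ↔ c ∈ deep D h ∧ sortedFill (deep D h) c = s := by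
  by_cases hc : c ∈ deep D h
  · rw [glueFill_of_mem_deep hc]
    exact ⟨fun hcs => ⟨hc, by omega⟩, fun hcs => by omega⟩
  · refine ⟨fun hcs => absurd ?_ hc, fun hcs => absurd hcs.1 hc⟩
    rw [glueFill] at hcs
    split_ifs at hcs with h₁ h₂
    · omega
    · exact mem_deep.2 ⟨h₁, not_le.1 h₂⟩
    · omega

lemma one_le_glueFill {c : ℕ × ℕ} (hc : c ∈ D) : 1 ≤ glueFill D h c := by
  have := one_le_sortedFill (E := deep D h) c
  unfold glueFill
  split_ifs
  · exact colDepth_pos hc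
  · omega

lemma glueFill_le_right (hD : (D : Set (ℕ × ℕ)).OrdConnected) {i j : ℕ} (h₁ : (i, j) ∈ D)
    (h₂ : (i, j + 1) ∈ D) : glueFill D h (i, j) ≤ glueFill D h (i, j + 1) := by
  have := colDepth_mono_right hD h₂ (Nat.le_add_right j 1)
  have := sortedFill_mono_right (E := deep D h) (i := i) (Nat.le_add_right j 1)
  have := one_le_sortedFill (E := deep D h) (i, j + 1)
  simp only [glueFill, if_pos h₁, if_pos h₂]
  split_ifs <;> omega

lemma glueFill_lt_down (hD : (D : Set (ℕ × ℕ)).OrdConnected) {i j : ℕ} (h₁ : (i, j) ∈ D)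
    (h₂ : (i + 1, j) ∈ D) : glueFill D h (i, j) < glueFill D h (i + 1, j) := by
  have hsucc := colDepth_succ h₂
  by_cases hd : colDepth D (i + 1, j) ≤ h
  · rw [glueFill_of_colDepth_le h₁ (by omega), glueFill_of_colDepth_le h₂ hd]
    omega
  have hdeep₂ : (i + 1, j) ∈ deep D h := mem_deep.2 ⟨h₂, not_le.1 hd⟩
  rw [glueFill_of_mem_deep hdeep₂]
  by_cases hd₁ : colDepth D (i, j) ≤ h
  · rw [glueFill_of_colDepth_le h₁ hd₁]
    have := one_le_sortedFill (E := deep D h) (i + 1, j)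
    omega
  · rw [glueFill_of_mem_deep (mem_deep.2 ⟨h₁, not_le.1 hd₁⟩)]
    exact Nat.add_lt_add_left (sortedFill_lt_of_col (ordConnected_deep hD)
      (mem_deep.2 ⟨h₁, not_le.1 hd₁⟩) hdeep₂ i.lt_succ_self) h

/-- Below depth `h`, an entry `k + 2` is matched with the entry `k + 1` just above it. -/
lemma glueFill_lattice_of_lt (hD : (D : Set (ℕ × ℕ)).OrdConnected) {k : ℕ} (hk : k + 1 < h)
    (i j : ℕ) :
    (D.filter (fun c => (c.1 < i ∨ (c.1 = i ∧ j ≤ c.2)) ∧ glueFill D h c = k + 2)).card ≤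
      (D.filter (fun c => (c.1 < i ∨ (c.1 = i ∧ j ≤ c.2)) ∧ glueFill D h c = k + 1)).card := by
  have hlow : ∀ {c}, glueFill D h c = k + 2 ↔ c ∈ D ∧ colDepth D c = k + 2 :=
    glueFill_eq_iff_of_le (by omega) (by omega)
  refine card_region_le_of_injOn (fun c => (c.1 - 1, c.2)) ?_ ?_ i j
  · rintro ⟨a, b⟩ - hv
    dsimp only
    obtain ⟨hc, hdepth⟩ := hlow.1 hv
    obtain ⟨ha, hup⟩ := sub_mem_of_lt_colDepth hD hc (s := 1) (by omega)
    have hsucc := colDepth_succ (D := D) (i := a - 1) (j := b)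
    rw [Nat.sub_add_cancel ha] at hsucc
    exact ⟨hup, by omega,
      (glueFill_eq_iff_of_le (by omega) (by omega)).2 ⟨hup, by have := hsucc hc; omega⟩⟩
  · rintro ⟨a, b⟩ hc ⟨a', b'⟩ hc' hcc'
    have := (hlow.1 hc.2).2
    have := (hlow.1 hc'.2).2
    have := colDepth_le_succ (D := D) (a, b)
    have := colDepth_le_succ (D := D) (a', b')
    simp only [Prod.mk.injEq] at hcc' this ⊢
    omega

/-- An entry `h + 1` is matched with the box of depth `h` in its column; there is at most one
entry `h + 1` per column since `sortedFill` increases down columns. -/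
lemma glueFill_lattice_of_eq (hD : (D : Set (ℕ × ℕ)).OrdConnected) {k : ℕ} (hk : k + 1 = h)
    (i j : ℕ) :
    (D.filter (fun c => (c.1 < i ∨ (c.1 = i ∧ j ≤ c.2)) ∧ glueFill D h c = k + 2)).card ≤
      (D.filter (fun c => (c.1 < i ∨ (c.1 = i ∧ j ≤ c.2)) ∧ glueFill D h c = k + 1)).card := by
  have htop : ∀ {c}, glueFill D h c = k + 2 ↔ c ∈ deep D h ∧ sortedFill (deep D h) c = 1 :=
    fun {c} => by rw [show k + 2 = h + 1 by omega]; exact glueFill_eq_add_iff le_rfl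
  refine card_region_le_of_injOn (fun c => (c.1 - (colDepth D c - h), c.2)) ?_ ?_ i j
  · rintro ⟨a, b⟩ - hv
    dsimp only
    obtain ⟨hc, hdepth⟩ := mem_deep.1 (htop.1 hv).1
    obtain ⟨hs, hup⟩ := sub_mem_of_lt_colDepth hD hc (s := colDepth D (a, b) - h) (by omega)
    have hadd := colDepth_add hD hup (s := colDepth D (a, b) - h)
      (by rwa [Nat.sub_add_cancel hs])
    rw [Nat.sub_add_cancel hs] at hadd
    exact ⟨hup, by omega,
      (glueFill_eq_iff_of_le (by omega) (by omega)).2 ⟨hup, by omega⟩⟩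
  · rintro ⟨a, b⟩ hc ⟨a', b'⟩ hc' hcc'
    obtain ⟨hc, hv⟩ := htop.1 hc.2
    obtain ⟨hc', hv'⟩ := htop.1 hc'.2
    obtain rfl : b = b' := (Prod.mk.inj hcc').2
    have hE := ordConnected_deep (h := h) hD
    rcases lt_trichotomy a a' with hlt | rfl | hlt
    · exact absurd (sortedFill_lt_of_col hE hc hc' hlt) (by omega)
    · rfl
    · exact absurd (sortedFill_lt_of_col hE hc' hc hlt) (by omega)

lemma glueFill_lattice_of_gt (hD : (D : Set (ℕ × ℕ)).OrdConnected) {k : ℕ} (hk : h < k + 1)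
    (i j : ℕ) :
    (D.filter (fun c => (c.1 < i ∨ (c.1 = i ∧ j ≤ c.2)) ∧ glueFill D h c = k + 2)).card ≤
      (D.filter (fun c => (c.1 < i ∨ (c.1 = i ∧ j ≤ c.2)) ∧ glueFill D h c = k + 1)).card := by
  have hE := ordConnected_deep (h := h) hD
  have hhigh : ∀ {c}, glueFill D h c = k + 2 →
      c ∈ deep D h ∧ sortedFill (deep D h) c = k + 2 - h := fun hv =>
    (glueFill_eq_add_iff (by omega)).1 (by omega)
  refine card_region_le_of_injOn (sortedPrev (deep D h)) ?_ ?_ i j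
  · rintro c - hv
    obtain ⟨hc, hv⟩ := hhigh hv
    obtain ⟨hprev, hlt, -, hval⟩ := sortedPrev_spec hE (c := c) (by omega)
    refine ⟨deep_subset hprev, hlt, ?_⟩
    rw [show k + 1 = h + (k + 1 - h) by omega]
    exact (glueFill_eq_add_iff (by omega)).2 ⟨hprev, by omega⟩
  · intro c hc c' hc' hcc'
    obtain ⟨hc, hv⟩ := hhigh hc.2
    obtain ⟨hc', hv'⟩ := hhigh hc'.2
    have hdist := (sortedPrev_spec hE (c := c) (by omega)).2.2.1
    have hdist' := (sortedPrev_spec hE (c := c') (by omega)).2.2.1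
    exact eq_of_sortedFill_eq hE hc hc' (by rw [← hdist, ← hdist', hcc']) (hv.trans hv'.symm)

lemma isLattice_glueFill (hD : (D : Set (ℕ × ℕ)).OrdConnected) :
    IsLattice D (glueFill D h) := by
  intro i j k
  rcases lt_trichotomy (k + 1) h with hk | hk | hk
  · exact glueFill_lattice_of_lt hD hk i j
  · exact glueFill_lattice_of_eq hD hk i j
  · exact glueFill_lattice_of_gt hD hk i j

lemma card_glueFill_eq_succ_le (hD : (D : Set (ℕ × ℕ)).OrdConnected)
    (hsq : ∀ i j, (i, j) ∈ D → (i + h, j + h) ∉ D) :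
    (D.filter (fun c => glueFill D h c = h + 1)).card ≤ h := by
  rw [filter_congr (fun c _ => glueFill_eq_add_iff (D := D) (h := h) (c := c) le_rfl),
    ← filter_filter, filter_mem_eq_inter, inter_eq_right.2 deep_subset]
  exact card_sortedFill_eq_one_le (ordConnected_deep hD) (rowCount_deep_le hD hsq)

lemma exists_isLRFilling_notMem (hD : (D : Set (ℕ × ℕ)).OrdConnected)
    (hsq : ∀ i j, (i, j) ∈ D → (i + h, j + h) ∉ D) :
    ∃ ν : YoungDiagram, (∃ T, IsLRFilling D ν T) ∧ (h, h) ∉ ν := by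
  obtain ⟨ν, hν⟩ := exists_isLRFilling (fun c hc => if_neg hc) (fun c => one_le_glueFill)
    (fun i j => glueFill_le_right hD) (fun i j => glueFill_lt_down hD) (isLattice_glueFill hD)
  refine ⟨ν, ⟨_, hν⟩, fun hmem => ?_⟩
  rw [YoungDiagram.mem_iff_lt_rowLen, ← hν.card_filter_eq_rowLen] at hmem
  exact absurd (card_glueFill_eq_succ_le hD hsq) (not_le.2 hmem)

end GluedFilling

theorem stmt15_general (lam mu : YoungDiagram) (h : ℕ)
    (hh : ∀ k, (nw (skewCells lam mu) k).Nonempty ↔ k < h) :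
    (∀ ν : YoungDiagram, lr lam mu ν ≠ 0 → h ≤ durfee ν) ∧
    IsLeast {d | ∃ ν : YoungDiagram, lr lam mu ν ≠ 0 ∧ durfee ν = d} h ∧
    (∀ ν : YoungDiagram, lr lam mu ν ≠ 0 →
      (∀ i, hl ν i = pinw (skewCells lam mu) i) → durfee ν = h) := by
  have hA := ordConnected_skewCells lam mu
  have lower : ∀ ν : YoungDiagram, lr lam mu ν ≠ 0 → h ≤ durfee ν := by
    intro ν hν
    obtain ⟨T, hT⟩ := lr_ne_zero_iff.1 hν
    obtain _ | k := h
    · exact Nat.zero_le _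
    obtain ⟨i, j, hc, hc'⟩ := (nw_nonempty_iff hA).1 ((hh k).2 k.lt_succ_self)
    exact mem_iff_lt_durfee.1 (hT.diag_mem_of_square hA hc hc')
  refine ⟨lower, ⟨?_, fun d ⟨ν, hν, hd⟩ => hd ▸ lower ν hν⟩, fun ν _ hhl => ?_⟩
  · obtain ⟨ν, hν, hnot⟩ := exists_isLRFilling_notMem hA fun i j hc hc' =>
      (hh h).1 ((nw_nonempty_iff hA).2 ⟨i, j, hc, hc'⟩) |>.false
    have hν := lr_ne_zero_iff.2 hν
    exact ⟨ν, hν, le_antisymm (not_lt.1 (mt mem_iff_lt_durfee.2 hnot)) (lower ν hν)⟩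
  · refine eq_of_forall_lt_iff fun i => ?_
    rw [← mem_iff_lt_durfee, mem_iff_hl_pos, hhl, pinw, card_pos, hh]

/-- Let `h` be the number of nonempty northwest ribbons of the skew diagram `lam/mu`.
Every `ν` with `c(lam; mu, ν) ≠ 0` has Durfee size at least `h`; the bound is attained,
so the minimal Durfee size of a constituent is exactly `h`; and the `ν` with maximal
hook length partition `hl(ν) = π_nw(lam/mu)` have Durfee size exactly `h`. -/
theorem stmt15 (lam mu : YoungDiagram) (hmu : mu ≤ lam) (h : ℕ)
    (hh : ∀ k, (nw (skewCells lam mu) k).Nonempty ↔ k < h) :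
    (∀ ν : YoungDiagram, lr lam mu ν ≠ 0 → h ≤ durfee ν) ∧
    IsLeast {d | ∃ ν : YoungDiagram, lr lam mu ν ≠ 0 ∧ durfee ν = d} h ∧
    (∀ ν : YoungDiagram, lr lam mu ν ≠ 0 →
      (∀ i, hl ν i = pinw (skewCells lam mu) i) → durfee ν = h) :=
  stmt15_general lam mu h hh

end SkewHooks
end

section
/- If an h×h square of boxes is contained in the skew diagram λ/μ (i.e. there exist r, c with (r+a, c+b) ∈ λ/μ for all 0 ≤ a,b < h), then every partition ν with c(λ; μ, ν) ≠ 0 has Durfee size d(ν) ≥ h. -/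
/-!
Take an LR filling `T` of `λ/μ` with content `ν`. Column strictness forces every entry in the
bottom row of an `h × h` square of `λ/μ` to be at least `h`. The lattice condition, applied in row
`i` just left of its first entry `k + 2`, shows that the number of `k + 2`s in rows `≤ i` is at most
the number of `k + 1`s in rows `< i`. By downward induction from the largest entry, the number of
entries `≥ m` in a row is then at most the number of entries `m` in that row and above it. With
`m = h` and the bottom row of the square this gives `ν_h ≥ h`, so `(h - 1, h - 1) ∈ ν`.
-/
open Finset

namespace SkewHooks

def countAbove (D : Finset (ℕ × ℕ)) (T : ℕ × ℕ → ℕ) (i m : ℕ) : ℕ :=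
  (D.filter fun x => x.1 < i ∧ T x = m).card

def rowCountGe (D : Finset (ℕ × ℕ)) (T : ℕ × ℕ → ℕ) (i m : ℕ) : ℕ :=
  (D.filter fun x => x.1 = i ∧ m ≤ T x).card

lemma countAbove_succ (D : Finset (ℕ × ℕ)) (T : ℕ × ℕ → ℕ) (i m : ℕ) :
    countAbove D T (i + 1) m =
      countAbove D T i m + (D.filter fun x => x.1 = i ∧ T x = m).card := by
  rw [countAbove, countAbove, ← card_union_of_disjoint
    (disjoint_filter.2 fun x _ h₁ h₂ => by omega), ← filter_or]
  exact congrArg card (filter_congr fun x _ => by omega)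

lemma rowCountGe_eq (D : Finset (ℕ × ℕ)) (T : ℕ × ℕ → ℕ) (i m : ℕ) :
    rowCountGe D T i m =
      (D.filter fun x => x.1 = i ∧ T x = m).card + rowCountGe D T i (m + 1) := by
  rw [rowCountGe, rowCountGe, ← card_union_of_disjoint
    (disjoint_filter.2 fun x _ h₁ h₂ => by omega), ← filter_or]
  exact congrArg card (filter_congr fun x _ => by omega)

lemma mem_skewCells_of_le_of_le {lam mu : YoungDiagram} {i j j' j'' : ℕ}
    (h : (i, j) ∈ skewCells lam mu) (h' : (i, j') ∈ skewCells lam mu)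
    (hj : j ≤ j'') (hj' : j'' ≤ j') : (i, j'') ∈ skewCells lam mu := by
  simp only [skewCells, mem_sdiff, YoungDiagram.mem_cells] at *
  exact ⟨lam.up_left_mem le_rfl hj' h'.1, fun hm => h.2 (mu.up_left_mem le_rfl hj hm)⟩

namespace IsLRFilling

variable {lam mu ν : YoungDiagram} {T : ℕ × ℕ → ℕ}

lemma row_mono (hT : IsLRFilling (skewCells lam mu) ν T) {i j j' : ℕ} (hj : j ≤ j')
    (h : (i, j) ∈ skewCells lam mu) (h' : (i, j') ∈ skewCells lam mu) :
    T (i, j) ≤ T (i, j') := by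
  induction j', hj using Nat.le_induction with
  | base => rfl
  | succ n hn ih =>
    have hmem : (i, n) ∈ skewCells lam mu := mem_skewCells_of_le_of_le h h' hn (by omega)
    exact (ih hmem).trans (hT.2.2.1 i n hmem h')

lemma add_le_of_column {D : Finset (ℕ × ℕ)} (hT : IsLRFilling D ν T) {r c : ℕ} :
    ∀ a, (∀ a' ≤ a, (r + a', c) ∈ D) → a + 1 ≤ T (r + a, c)
  | 0, hcol => hT.2.1 _ (hcol 0 le_rfl)
  | a + 1, hcol => by
    have := hT.2.2.2.1 (r + a) c (hcol a (by omega)) (hcol (a + 1) le_rfl)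
    have := add_le_of_column hT a fun a' ha' => hcol a' (by omega)
    rw [← add_assoc]
    omega

/-- The lattice condition read just left of the first `k + 2` of row `i` (or past the end of
the row if there is none): every `k + 2` of row `i` has been read, but no `k + 1` of it. -/
lemma countAbove_succ_le (hT : IsLRFilling (skewCells lam mu) ν T) (i k : ℕ) :
    countAbove (skewCells lam mu) T (i + 1) (k + 2) ≤
      countAbove (skewCells lam mu) T i (k + 1) := by
  obtain ⟨j₀, hge, hlt⟩ : ∃ j₀, (∀ x ∈ skewCells lam mu, x.1 = i → T x = k + 2 → j₀ ≤ x.2) ∧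
      (∀ x ∈ skewCells lam mu, x.1 = i → T x = k + 1 → x.2 < j₀) := by
    by_cases hrow : ((skewCells lam mu).filter fun x => x.1 = i ∧ T x = k + 2).Nonempty
    · obtain ⟨⟨i₀, j₀⟩, hx₀, hmin⟩ := exists_min_image _ Prod.snd hrow
      obtain ⟨hx₀D, rfl, hx₀T⟩ := mem_filter.1 hx₀
      refine ⟨j₀, fun x hx hxi hxT => hmin x (mem_filter.2 ⟨hx, hxi, hxT⟩), ?_⟩
      rintro ⟨i, j⟩ hx (rfl : i = i₀) hxT
      by_contra! hle
      have := hT.row_mono (j' := j) hle hx₀D hx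
      omega
    · refine ⟨(skewCells lam mu).sup Prod.snd + 1,
        fun x hx hxi hxT => (hrow ⟨x, mem_filter.2 ⟨hx, hxi, hxT⟩⟩).elim,
        fun x hx _ _ => Nat.lt_succ_of_le (le_sup (f := Prod.snd) hx)⟩
  refine (card_le_card ?_).trans ((hT.2.2.2.2.2 i j₀ k).trans (card_le_card ?_))
  · intro x hx
    rw [mem_filter] at hx ⊢
    refine ⟨hx.1, ?_, hx.2.2⟩
    rcases Nat.lt_succ_iff_lt_or_eq.1 hx.2.1 with h | h
    exacts [Or.inl h, Or.inr ⟨h, hge x hx.1 h hx.2.2⟩]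
  · intro x hx
    rw [mem_filter] at hx ⊢
    refine ⟨hx.1, ?_, hx.2.2⟩
    rcases hx.2.1 with h | ⟨h, hj⟩
    exacts [h, absurd (hlt x hx.1 h hx.2.2) (by omega)]

lemma rowCountGe_le_countAbove (hT : IsLRFilling (skewCells lam mu) ν T) (i : ℕ) {m : ℕ}
    (hm : 1 ≤ m) :
    rowCountGe (skewCells lam mu) T i m ≤ countAbove (skewCells lam mu) T (i + 1) m := by
  -- downward induction on `m`, starting above the largest entry
  suffices ∀ n m, 1 ≤ m → (skewCells lam mu).sup T < m + n →
      rowCountGe (skewCells lam mu) T i m ≤ countAbove (skewCells lam mu) T (i + 1) m from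
    this ((skewCells lam mu).sup T + 1) m hm (by omega)
  intro n
  induction n with
  | zero =>
    intro m _ hsup
    have : rowCountGe (skewCells lam mu) T i m = 0 := card_eq_zero.2 <| filter_eq_empty_iff.2
      fun x hx hle => by have := le_sup (f := T) hx; omega
    omega
  | succ n ih =>
    intro m hm hsup
    obtain ⟨k, rfl⟩ : ∃ k, m = k + 1 := ⟨m - 1, by omega⟩
    have := ih (k + 2) (by omega) (by omega)
    have := hT.countAbove_succ_le i k
    rw [rowCountGe_eq, countAbove_succ, show k + 1 + 1 = k + 2 from rfl]
    omega

lemma succ_le_rowLen_of_square (hT : IsLRFilling (skewCells lam mu) ν T) {r c k : ℕ}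
    (hsq : ∀ a ≤ k, ∀ b ≤ k, (r + a, c + b) ∈ skewCells lam mu) :
    k + 1 ≤ ν.rowLen k := by
  have hbottom : k + 1 ≤ rowCountGe (skewCells lam mu) T (r + k) (k + 1) := by
    simpa [rowCountGe] using card_le_card_of_injOn (fun b => (r + k, c + b)) (s := range (k + 1))
      (fun b hb => mem_filter.2 ⟨hsq k le_rfl b (by simp at hb; omega), rfl,
        hT.add_le_of_column k fun a ha => hsq a ha b (by simp at hb; omega)⟩)
      (fun b _ b' _ hbb' => by simpa using hbb')
  calc k + 1 ≤ rowCountGe (skewCells lam mu) T (r + k) (k + 1) := hbottom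
    _ ≤ countAbove (skewCells lam mu) T (r + k + 1) (k + 1) :=
      hT.rowCountGe_le_countAbove _ (by omega)
    _ ≤ ((skewCells lam mu).filter fun x => T x = k + 1).card := card_le_card fun x hx => by
      simp only [mem_filter] at hx ⊢
      exact ⟨hx.1, hx.2.2⟩
    _ = ν.rowLen k := hT.2.2.2.2.1 k

end IsLRFilling

lemma le_durfee_of_le_rowLen {ν : YoungDiagram} {k : ℕ} (hk : k + 1 ≤ ν.rowLen k) :
    k + 1 ≤ durfee ν := by
  have hdiag : ∀ i ≤ k, (i, i) ∈ ν := fun i hi =>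
    YoungDiagram.mem_iff_lt_rowLen.2 (by have := ν.rowLen_anti i k hi; omega)
  have hcard : ν.rowLen k ≤ ν.card := by
    rw [ν.rowLen_eq_card]; exact card_le_card (filter_subset _ _)
  simpa [durfee] using card_le_card (s := range (k + 1)) fun i hi => by
    simp only [mem_range] at hi
    exact mem_filter.2 ⟨mem_range.2 (by omega), hdiag i (by omega)⟩

theorem stmt16_general (lam mu : YoungDiagram) (h : ℕ)
    (hsq : ∃ r c : ℕ, ∀ a < h, ∀ b < h, (r + a, c + b) ∈ skewCells lam mu) :
    ∀ ν : YoungDiagram, lr lam mu ν ≠ 0 → h ≤ durfee ν := by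
  intro ν hν
  obtain ⟨T, hT⟩ := Set.nonempty_of_ncard_ne_zero hν
  obtain ⟨r, c, hsq⟩ := hsq
  cases h with
  | zero => exact Nat.zero_le _
  | succ k =>
    exact le_durfee_of_le_rowLen <| hT.succ_le_rowLen_of_square fun a ha b hb =>
      hsq a (Nat.lt_succ_of_le ha) b (Nat.lt_succ_of_le hb)

/-- If an `h × h` square of boxes is contained in the skew diagram `lam/mu`, then
every partition `ν` with `c(lam; mu, ν) ≠ 0` has Durfee size at least `h`. -/
theorem stmt16 (lam mu : YoungDiagram) (hmu : mu ≤ lam) (h : ℕ)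
    (hsq : ∃ r c : ℕ, ∀ a < h, ∀ b < h, (r + a, c + b) ∈ skewCells lam mu) :
    ∀ ν : YoungDiagram, lr lam mu ν ≠ 0 → h ≤ durfee ν :=
  stmt16_general lam mu h hsq

end SkewHooks
end
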